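/- arXiv:2208.08350 — 5 statements merged into one kernel-verified Lean document; each statement's English description precedes it below -/
import Mathlib

section
/- For every n ≥ 3, every graph G on 2n−1 vertices with fewer than ⌈(n+1)(2n−1)/2⌉ edges admits a coloring of its edges with two colors (red and blue) such that there is no red copy of C_n and no blue cycle of odd length (in particular, no blue copy of C_k for any odd k ≥ 3). -/
/-! Some vertex `v` has degree at most `n`. Put `v`, `n - 2` of its non-neighbours and one more
vertex into a set `A` of size `n`, colour red the edges inside `A` or inside its complement and
blue the edges between them. The blue graph is bipartite. A red `C_n` cannot fit into the
complement, which has only `n - 1` vertices, so it spans `A` and passes through `v`; but `v` has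
at most one red neighbour. -/

open SimpleGraph

/-- `e(S,T)`: the number of ordered pairs `(v,w)` with `v ∈ S`, `w ∈ T` and `v` adjacent to `w`;
this counts edges with one end in `S` and the other in `T`, edges inside `S ∩ T` twice. -/
noncomputable def interCount {V : Type} (G : SimpleGraph V) (S T : Set V) : ℕ :=
  {p : V × V | p.1 ∈ S ∧ p.2 ∈ T ∧ G.Adj p.1 p.2}.ncard

/-- The degree of a vertex. -/
noncomputable def degCount {V : Type} (G : SimpleGraph V) (v : V) : ℕ :=
  (G.neighborSet v).ncard

/-- The codegree of a pair of vertices. -/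
noncomputable def codegCount {V : Type} (G : SimpleGraph V) (v w : V) : ℕ :=
  (G.neighborSet v ∩ G.neighborSet w).ncard

/-- A graph is `n`-fit if it has `2n-1` vertices, `⌈(n+1)(2n-1)/2⌉` edges, minimum degree
exactly `n+1`, all codegrees within `n^0.7` of `n/2`, and `|e(S,T) - |S||T|/2| ≤ n^1.7`
for all vertex sets `S`, `T`. -/
def IsNFit {V : Type} (n : ℕ) (G : SimpleGraph V) : Prop :=
  Nat.card V = 2 * n - 1 ∧
  G.edgeSet.ncard = ((n + 1) * (2 * n - 1) + 1) / 2 ∧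
  (∀ v : V, n + 1 ≤ degCount G v) ∧
  (∃ v : V, degCount G v = n + 1) ∧
  (∀ v w : V, v ≠ w → |(codegCount G v w : ℝ) - n / 2| ≤ (n : ℝ) ^ (0.7 : ℝ)) ∧
  (∀ S T : Set V, |(interCount G S T : ℝ) - S.ncard * T.ncard / 2| ≤ (n : ℝ) ^ (1.7 : ℝ))

/-- `G` contains a cycle of length `m` (a copy of `C_m`). -/
def HasCycleLen {V : Type} (G : SimpleGraph V) (m : ℕ) : Prop :=
  ∃ (v : V) (c : G.Walk v v), c.IsCycle ∧ c.length = m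

/-- `G` contains a path of length `k` (with `k` edges) joining `u` and `v`. -/
def HasPathLen {V : Type} (G : SimpleGraph V) (u v : V) (k : ℕ) : Prop :=
  ∃ p : G.Walk u v, p.IsPath ∧ p.length = k

/-- `G → (C_n, C_k)`: every red/blue coloring of the edges of `G` (the red edges forming a
subgraph `R ≤ G`, the blue ones being `G \ R`) yields a red `C_n` or a blue `C_k`. -/
def ArrowsCC {V : Type} (G : SimpleGraph V) (n k : ℕ) : Prop :=
  ∀ R : SimpleGraph V, R ≤ G → HasCycleLen R n ∨ HasCycleLen (G \ R) k

/-- The density of a pair of vertex sets. -/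
noncomputable def dens {V : Type} (G : SimpleGraph V) (S T : Set V) : ℝ :=
  (interCount G S T : ℝ) / (S.ncard * T.ncard)

/-- `(V1, V2)` is an `ε`-regular pair. -/
def IsRegularPair {V : Type} (G : SimpleGraph V) (ε : ℝ) (V1 V2 : Set V) : Prop :=
  ∀ W1 W2 : Set V, W1 ⊆ V1 → W2 ⊆ V2 →
    ε * V1.ncard ≤ (W1.ncard : ℝ) → ε * V2.ncard ≤ (W2.ncard : ℝ) →
    |dens G V1 V2 - dens G W1 W2| ≤ ε

/-- `(V1, V2)` is a strongly `ε`-regular pair. -/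
def IsStronglyRegularPair {V : Type} (G : SimpleGraph V) (ε : ℝ) (V1 V2 : Set V) : Prop :=
  IsRegularPair G ε V1 V2 ∧
  (∀ v ∈ V1, dens G V1 V2 * V2.ncard / 10 ≤ ((G.neighborSet v ∩ V2).ncard : ℝ)) ∧
  (∀ v ∈ V2, dens G V1 V2 * V1.ncard / 10 ≤ ((G.neighborSet v ∩ V1).ncard : ℝ))

/-- A graph has property `M_t` if it contains a matching saturating `⌈t⌉` vertices which is
contained in a single non-bipartite connected component. -/
def PropertyM {V : Type} (H : SimpleGraph V) (t : ℝ) : Prop :=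
  ∃ M : H.Subgraph, M.IsMatching ∧ ⌈t⌉ ≤ (M.verts.ncard : ℤ) ∧
    ∃ c : H.ConnectedComponent, M.verts ⊆ c.supp ∧ ¬ (H.induce c.supp).Colorable 2

open Finset

namespace SimpleGraph

variable {V : Type}

lemma exists_degree_le_of_two_mul_card_edgeFinset_lt [Fintype V] (G : SimpleGraph V)
    [DecidableRel G.Adj] {d : ℕ} (h : 2 * #G.edgeFinset < Fintype.card V * (d + 1)) :
    ∃ v, G.degree v ≤ d := by
  by_contra! hdeg
  have : Fintype.card V * (d + 1) ≤ ∑ v, G.degree v := by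
    simpa using Finset.sum_le_sum fun v (_ : v ∈ univ) => Nat.succ_le_of_lt (hdeg v)
  rw [sum_degrees_eq_twice_card_edges] at this
  omega

lemma exists_card_eq_card_inter_neighborFinset_le_one [Fintype V] [DecidableEq V]
    (G : SimpleGraph V) [DecidableRel G.Adj] {v : V} {n : ℕ} (hn : 1 ≤ n)
    (hnV : n ≤ Fintype.card V) (hdeg : G.degree v + n ≤ Fintype.card V + 1) :
    ∃ A : Finset V, #A = n ∧ v ∈ A ∧ #(A ∩ G.neighborFinset v) ≤ 1 := by
  set B := (G.neighborFinset v)ᶜ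
  have hvB : v ∈ B := by simp [B]
  have hB : #B = Fintype.card V - G.degree v := by simp [B, card_compl]
  obtain ⟨B', hvB', hB'B, hB'⟩ := exists_subsuperset_card_eq (singleton_subset_iff.2 hvB)
    (n := min n #B) (by rw [card_singleton]; exact le_min hn (card_pos.2 ⟨v, hvB⟩))
    (min_le_right _ _)
  obtain ⟨A, hB'A, -, hA⟩ := exists_subsuperset_card_eq (subset_univ B') (n := n)
    (hB'.trans_le (min_le_left n #B)) (by rwa [card_univ])
  refine ⟨A, hA, hB'A (singleton_subset_iff.1 hvB'), ?_⟩
  have hsub : A ∩ G.neighborFinset v ⊆ A \ B' := fun x hx => by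
    rw [mem_inter] at hx
    exact mem_sdiff.2 ⟨hx.1, fun hxB' => mem_compl.1 (hB'B hxB') hx.2⟩
  have := card_le_card hsub
  rw [card_sdiff_of_subset hB'A] at this
  omega

def cutGraph (A : Set V) : SimpleGraph V where
  Adj x y := ¬(x ∈ A ↔ y ∈ A)
  symm := ⟨fun _ _ h h' => h h'.symm⟩
  loopless := ⟨fun _ h => h Iff.rfl⟩

@[simp]
lemma cutGraph_adj {A : Set V} {x y : V} : (cutGraph A).Adj x y ↔ ¬(x ∈ A ↔ y ∈ A) :=
  Iff.rfl

lemma even_length_of_le_cutGraph {H : SimpleGraph V} {A : Set V} (hH : H ≤ cutGraph A)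
    {u : V} (c : H.Walk u u) : Even c.length := by
  classical
  let col : H.Coloring Bool := Coloring.mk (fun x => decide (x ∈ A)) fun hxy => by
    simpa [decide_eq_decide] using hH hxy
  exact (col.even_length_iff_congr c).2 Iff.rfl

lemma Walk.mem_iff_of_forall_adj {H : SimpleGraph V} {A : Set V}
    (hH : ∀ ⦃x y⦄, H.Adj x y → (x ∈ A ↔ y ∈ A)) {u w : V} (p : H.Walk u w) :
    ∀ x ∈ p.support, x ∈ A ↔ u ∈ A := by
  induction p with
  | nil => simp
  | cons h _ ih =>
    simp only [Walk.support_cons, List.mem_cons, forall_eq_or_imp, iff_self, true_and]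
    exact fun x hx => (ih x hx).trans (hH h).symm

lemma Walk.IsCycle.card_support_toFinset [DecidableEq V] {H : SimpleGraph V} {u : V}
    {c : H.Walk u u} (hc : c.IsCycle) : c.support.toFinset.card = c.length := by
  rw [← c.cons_tail_support, List.toFinset_cons,
    insert_eq_of_mem (List.mem_toFinset.2 (Walk.end_mem_tail_support hc.not_nil)),
    List.toFinset_card_of_nodup hc.support_nodup, List.length_tail, Walk.length_support]
  rfl

lemma not_hasCycleLen_sdiff_cutGraph [Fintype V] [DecidableEq V] (G : SimpleGraph V)
    [DecidableRel G.Adj] {A : Finset V} (hAc : #Aᶜ < #A) {v : V} (hv : v ∈ A)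
    (hvA : #(A ∩ G.neighborFinset v) ≤ 1) : ¬HasCycleLen (G \ cutGraph A) #A := by
  rintro ⟨u, c, hc, hlen⟩
  have hside := Walk.mem_iff_of_forall_adj (A := (A : Set V))
    (fun x y hxy => by simpa using ((sdiff_adj ..).1 hxy).2) c
  have hcard : c.support.toFinset.card = #A := hc.card_support_toFinset.trans hlen
  by_cases hu : u ∈ A
  · have hsupp : c.support.toFinset = A := eq_of_subset_of_card_le
      (fun x hx => by simpa [hu] using hside x (List.mem_toFinset.1 hx)) hcard.ge
    have hvc : v ∈ c.support := List.mem_toFinset.1 (by rwa [hsupp])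
    have hsub : c.toSubgraph.neighborSet v ⊆ ↑(A ∩ G.neighborFinset v) := fun x hx => by
      obtain ⟨hGvx, hcut⟩ := (sdiff_adj ..).1 (c.toSubgraph.adj_sub hx)
      simp only [cutGraph_adj, coe_inter, mem_coe, not_not] at hcut ⊢
      exact ⟨hcut.1 hv, by simpa using hGvx⟩
    have := Set.ncard_le_ncard hsub
    rw [Set.ncard_coe_finset, hc.ncard_neighborSet_toSubgraph_eq_two hvc] at this
    omega
  · have hsupp : c.support.toFinset ⊆ Aᶜ :=
      fun x hx => by simpa [hu] using hside x (List.mem_toFinset.1 hx)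
    have := card_le_card hsupp
    omega

end SimpleGraph

/-- For every `n ≥ 3`, every graph on `2n-1` vertices with fewer than
`⌈(n+1)(2n-1)/2⌉` edges admits a red/blue edge coloring with no red `C_n` and no blue
odd cycle. -/
theorem lower_bound_coloring :
    ∀ n : ℕ, 3 ≤ n → ∀ G : SimpleGraph (Fin (2 * n - 1)),
    G.edgeSet.ncard < ((n + 1) * (2 * n - 1) + 1) / 2 →
    ∃ R : SimpleGraph (Fin (2 * n - 1)), R ≤ G ∧
      ¬ HasCycleLen R n ∧ ∀ ℓ : ℕ, Odd ℓ → ¬ HasCycleLen (G \ R) ℓ := by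
  intro n hn G hG
  classical
  rw [← coe_edgeFinset, Set.ncard_coe_finset] at hG
  obtain ⟨v, hv⟩ := G.exists_degree_le_of_two_mul_card_edgeFinset_lt (d := n) <| by
    rw [Fintype.card_fin, mul_comm (2 * n - 1)]
    generalize (n + 1) * (2 * n - 1) = m at hG ⊢
    omega
  obtain ⟨A, hA, hvA, hAv⟩ := G.exists_card_eq_card_inter_neighborFinset_le_one (v := v)
    (n := n) (by omega) (by rw [Fintype.card_fin]; omega) (by rw [Fintype.card_fin]; omega)
  have hAc : #Aᶜ < #A := by rw [card_compl, Fintype.card_fin]; omega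
  have hred := G.not_hasCycleLen_sdiff_cutGraph hAc hvA hAv
  rw [hA] at hred
  refine ⟨G \ cutGraph A, sdiff_le, hred, ?_⟩
  rintro ℓ hℓ ⟨u, c, -, rfl⟩
  have hblue : G \ (G \ cutGraph A) ≤ cutGraph A := sdiff_sdiff_right_self.trans_le inf_le_right
  exact Nat.not_even_iff_odd.2 hℓ (even_length_of_le_cutGraph hblue c)
end

section
/- For all sufficiently large n there exists a graph G on 2n−1 vertices such that: (a) |deg(v) − n| ≤ n^{0.6} for every vertex v; (b) ||N(v) ∩ N(w)| − n/2| ≤ n^{0.6} for every pair of distinct vertices v, w; and (c) |e(S, T) − |S||T|/2| ≤ n^{1.6} for all subsets S, T of the vertex set. -/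
open SimpleGraph

/-!
Take `G(m, 1/2)` with `m = 2n - 1`, i.e. count the indicators `ω : Sym2 V → Bool` of edge sets.
A degree, a codegree and `e(S, T)` are each a constant plus a sum of bounded mean-zero terms
depending on disjoint sets of pairs, so the exponential-moment (Chernoff) bound makes each
deviation exponentially unlikely: `exp(-Ω(n^0.2))` for the `O(n²)` degree and codegree events
and `exp(-Ω(n^1.2))` for the `4^m` events about `e(S, T)`. These failure probabilities add up to
less than `1`, so some indicator avoids all of them.
-/

open Finset Real
open scoped BigOperators Nat

section UniformProduct

variable {L β : Type*} [Fintype L] [DecidableEq L] [Fintype β] [Nonempty β]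

lemma expect_mul_of_dependsOn_compl {f g : (L → β) → ℝ} {s : Set L}
    (hf : DependsOn f s) (hg : DependsOn g sᶜ) :
    𝔼 ω, f ω * g ω = (𝔼 ω, f ω) * 𝔼 ω, g ω := by
  classical
  let e := (Equiv.piEquivPiSubtypeProd (· ∈ s) fun _ => β).symm
  obtain ⟨σ₀, τ₀⟩ : Nonempty ((s → β) × ((sᶜ : Set L) → β)) := inferInstance
  have hf' : ∀ σ τ, f (e (σ, τ)) = f (e (σ, τ₀)) := fun σ τ =>
    hf fun a ha => by simp [e, ha]
  have hg' : ∀ σ τ, g (e (σ, τ)) = g (e (σ₀, τ)) := fun σ τ =>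
    hg fun a ha => by simp [e, show a ∉ s from ha]
  have split : ∀ h : (L → β) → ℝ, 𝔼 ω, h ω = 𝔼 σ, 𝔼 τ, h (e (σ, τ)) := fun h => by
    rw [← Fintype.expect_equiv e (fun p => h (e p)) h fun _ => rfl, ← expect_product',
      univ_product_univ]
  rw [split, split f, split g]
  simp_rw [hf', hg', Fintype.expect_const, Fintype.expect_mul_expect]

lemma expect_prod_of_dependsOn {ι : Type*} (s : Finset ι) {A : ι → Set L}
    (hA : (s : Set ι).PairwiseDisjoint A) {F : ι → (L → β) → ℝ}
    (hF : ∀ i ∈ s, DependsOn (F i) (A i)) :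
    𝔼 ω, ∏ i ∈ s, F i ω = ∏ i ∈ s, 𝔼 ω, F i ω := by
  classical
  induction s using Finset.induction_on with
  | empty => simp
  | insert j s hj ih =>
    have hrest : DependsOn (fun ω => ∏ i ∈ s, F i ω) (A j)ᶜ := fun x y hxy =>
      prod_congr rfl fun i hi => hF i (mem_insert_of_mem hi) fun a ha =>
        hxy a <| Set.disjoint_right.1
          (hA (by simp) (by simp [hi]) (ne_of_mem_of_not_mem hi hj).symm) ha
    simp_rw [prod_insert hj]
    rw [expect_mul_of_dependsOn_compl (hF j (mem_insert_self j s)) hrest,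
      ih (hA.subset (by simp)) fun i hi => hF i (mem_insert_of_mem hi)]

lemma expect_comp_eval (a : L) (g : β → ℝ) : 𝔼 ω : L → β, g (ω a) = 𝔼 b, g b := by
  let e := (Equiv.funSplitAt a β).symm
  rw [← Fintype.expect_equiv e (fun p => g (e p a)) _ fun _ => rfl, ← univ_product_univ,
    expect_product]
  simp [e]

end UniformProduct

lemma expect_boole_eval {L : Type*} [Fintype L] [DecidableEq L] (a : L) :
    𝔼 ω : L → Bool, (if ω a then 1 else 0 : ℝ) = 1 / 2 := by
  rw [expect_comp_eval a fun b : Bool => if b then (1 : ℝ) else 0,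
    Fintype.expect_eq_sum_div_card]
  simp

lemma expect_prod_boole_eval {L ι : Type*} [Fintype L] [DecidableEq L] (U : Finset ι)
    {f : ι → L} (hf : Set.InjOn f U) :
    𝔼 ω : L → Bool, ∏ u ∈ U, (if ω (f u) then 1 else 0 : ℝ) = (1 / 2) ^ #U := by
  rw [expect_prod_of_dependsOn U (A := fun u => {f u})
    (fun u hu u' hu' huu' => Set.disjoint_singleton.2 fun h => huu' (hf hu hu' h))
    fun u _ ω₁ ω₂ h => by rw [h _ rfl]]
  simp_rw [expect_boole_eval, prod_const]

section Chernoff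

variable {Ω : Type*} [Fintype Ω]

lemma card_filter_lt_mul_exp_le (X : Ω → ℝ) {r : ℝ} (hr : 0 ≤ r) (t : ℝ) :
    #{ω | t < X ω} * exp (r * t) ≤ Fintype.card Ω * 𝔼 ω, exp (r * X ω) := by
  rw [Fintype.card_mul_expect, ← nsmul_eq_mul]
  calc #{ω | t < X ω} • exp (r * t) ≤ ∑ ω ∈ {ω | t < X ω}, exp (r * X ω) :=
        card_nsmul_le_sum _ _ _ fun ω hω =>
          exp_le_exp.2 (mul_le_mul_of_nonneg_left (mem_filter.1 hω).2.le hr)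
    _ ≤ ∑ ω, exp (r * X ω) := sum_le_univ_sum_of_nonneg fun _ => (exp_pos _).le

lemma expect_exp_mul_le [Nonempty Ω] {X : Ω → ℝ} (hmean : 𝔼 ω, X ω = 0)
    (hbound : ∀ ω, |X ω| ≤ 1) {r : ℝ} (hr : |r| ≤ 1) :
    𝔼 ω, exp (r * X ω) ≤ exp (r ^ 2) := by
  have quadratic : ∀ ω, exp (r * X ω) ≤ 1 + r * X ω + r ^ 2 := fun ω => by
    have hrX : |r * X ω| ≤ 1 := by
      rw [abs_mul]
      exact mul_le_one₀ hr (abs_nonneg _) (hbound ω)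
    have hsq : (r * X ω) ^ 2 ≤ r ^ 2 := by
      rw [mul_pow, ← sq_abs (X ω)]
      exact mul_le_of_le_one_right (sq_nonneg r) (pow_le_one₀ (abs_nonneg _) (hbound ω))
    linarith [le_abs_self (exp (r * X ω) - 1 - r * X ω), abs_exp_sub_one_sub_id_le hrX]
  calc 𝔼 ω, exp (r * X ω) ≤ 𝔼 ω, (1 + r * X ω + r ^ 2) :=
        expect_le_expect fun ω _ => quadratic ω
    _ = 1 + r ^ 2 := by
        rw [expect_add_distrib, expect_add_distrib, ← mul_expect, hmean]
        simp
    _ ≤ exp (r ^ 2) := by linarith [add_one_le_exp (r ^ 2)]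

variable {L β : Type*} [Fintype L] [DecidableEq L] [Fintype β] [Nonempty β]
  {ι : Type*} (s : Finset ι) {A : ι → Set L} {F : ι → (L → β) → ℝ}

theorem card_filter_lt_sum_le (hA : (s : Set ι).PairwiseDisjoint A)
    (hF : ∀ i ∈ s, DependsOn (F i) (A i)) (hmean : ∀ i ∈ s, 𝔼 ω, F i ω = 0)
    (hbound : ∀ i ∈ s, ∀ ω, |F i ω| ≤ 1) {k t : ℝ} (hk : #s ≤ k) (ht : 0 ≤ t) :
    #{ω | t < ∑ i ∈ s, F i ω} ≤ Fintype.card (L → β) * exp (-(t ^ 2 / (4 * k))) := by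
  -- For `k ≤ t` the event is empty; otherwise `r = t / (2k)`, which minimises `r²k - rt`,
  -- is at most `1/2`, so the moment bound `expect_exp_mul_le` applies to every term.
  rcases le_or_gt k t with hkt | htk
  · have hsum : ∀ ω, ∑ i ∈ s, F i ω ≤ t := fun ω =>
      calc ∑ i ∈ s, F i ω ≤ ∑ i ∈ s, (1 : ℝ) :=
            sum_le_sum fun i hi => (le_abs_self _).trans (hbound i hi ω)
        _ ≤ t := by simpa using hk.trans hkt
    rw [filter_false_of_mem fun ω _ => (hsum ω).not_gt, card_empty, Nat.cast_zero]
    positivity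
  have hk0 : 0 < k := ht.trans_lt htk
  set r := t / (2 * k)
  have hr0 : 0 ≤ r := by positivity
  have hr1 : |r| ≤ 1 := by
    rw [abs_of_nonneg hr0, div_le_one (by positivity)]
    linarith
  have mgf : 𝔼 ω, exp (r * ∑ i ∈ s, F i ω) ≤ exp (r ^ 2 * k) :=
    calc 𝔼 ω, exp (r * ∑ i ∈ s, F i ω) = 𝔼 ω, ∏ i ∈ s, exp (r * F i ω) := by
          simp_rw [mul_sum, exp_sum]
      _ = ∏ i ∈ s, 𝔼 ω, exp (r * F i ω) :=
          expect_prod_of_dependsOn s hA fun i hi x y hxy => by rw [hF i hi hxy]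
      _ ≤ ∏ _i ∈ s, exp (r ^ 2) :=
          prod_le_prod (fun _ _ => expect_nonneg fun _ _ => (exp_pos _).le)
            fun i hi => expect_exp_mul_le (hmean i hi) (hbound i hi) hr1
      _ ≤ exp (r ^ 2 * k) := by
          rw [prod_const, ← exp_nat_mul, mul_comm]
          exact exp_le_exp.2 (mul_le_mul_of_nonneg_left hk (sq_nonneg r))
  have markov := card_filter_lt_mul_exp_le (fun ω => ∑ i ∈ s, F i ω) hr0 t
  rw [← le_div_iff₀ (exp_pos _)] at markov
  refine markov.trans ?_
  rw [div_le_iff₀ (exp_pos _), mul_assoc, ← exp_add]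
  have hexp : -(t ^ 2 / (4 * k)) + r * t = r ^ 2 * k := by
    simp only [r]
    field_simp
    ring
  rw [hexp]
  exact mul_le_mul_of_nonneg_left mgf (Nat.cast_nonneg _)

theorem card_filter_lt_abs_sum_le (hA : (s : Set ι).PairwiseDisjoint A)
    (hF : ∀ i ∈ s, DependsOn (F i) (A i)) (hmean : ∀ i ∈ s, 𝔼 ω, F i ω = 0)
    (hbound : ∀ i ∈ s, ∀ ω, |F i ω| ≤ 1) {k t : ℝ} (hk : #s ≤ k) (ht : 0 ≤ t) :
    #{ω | t < |∑ i ∈ s, F i ω|} ≤ 2 * Fintype.card (L → β) * exp (-(t ^ 2 / (4 * k))) := by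
  classical
  have hsub : ({ω | t < |∑ i ∈ s, F i ω|} : Finset (L → β)) ⊆
      ({ω | t < ∑ i ∈ s, F i ω} : Finset _) ∪ ({ω | t < ∑ i ∈ s, -F i ω} : Finset _) :=
    fun ω hω => by
      simp only [mem_filter, mem_univ, true_and, mem_union, sum_neg_distrib] at hω ⊢
      exact lt_abs.1 hω
  have upper := card_filter_lt_sum_le s hA hF hmean hbound hk ht
  have lower := card_filter_lt_sum_le s (F := fun i ω => -F i ω) hA
    (fun i hi x y hxy => congrArg Neg.neg (hF i hi hxy))
    (fun i hi => by rw [expect_neg_distrib, hmean i hi, neg_zero])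
    (fun i hi ω => by rw [abs_neg]; exact hbound i hi ω) hk ht
  calc (#{ω | t < |∑ i ∈ s, F i ω|} : ℝ)
      ≤ #{ω | t < ∑ i ∈ s, F i ω} + #{ω | t < ∑ i ∈ s, -F i ω} := by
        exact_mod_cast (card_le_card hsub).trans (card_union_le _ _)
    _ ≤ _ := by linarith

end Chernoff

lemma exists_forall_of_sum_card_filter_not_lt {Ω ι : Type*} [Fintype Ω] [Fintype ι]
    (P : ι → Ω → Prop) [∀ i, DecidablePred (P i)]
    (h : ∑ i, (#{ω | ¬ P i ω} : ℝ) < Fintype.card Ω) : ∃ ω, ∀ i, P i ω := by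
  classical
  by_contra! hbad
  have hcover : (univ : Finset Ω) ⊆ univ.biUnion fun i => {ω | ¬ P i ω} := fun ω _ => by
    obtain ⟨i, hi⟩ := hbad ω
    exact mem_biUnion.2 ⟨i, mem_univ _, mem_filter.2 ⟨mem_univ _, hi⟩⟩
  have hcard := (card_le_card hcover).trans card_biUnion_le
  rw [card_univ] at hcard
  exact h.not_ge (mod_cast hcard)

section Counting

variable {V : Type} [Fintype V] (G : SimpleGraph V) [DecidableRel G.Adj]

def SimpleGraph.commonNeighborFinset (U : Finset V) : Finset V := {x | ∀ u ∈ U, G.Adj u x}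

lemma degCount_eq_card_commonNeighborFinset (v : V) :
    degCount G v = #(G.commonNeighborFinset {v}) := by
  rw [degCount, Set.ncard_eq_toFinset_card']
  congr 1
  ext x
  simp [commonNeighborFinset]

lemma codegCount_eq_card_commonNeighborFinset [DecidableEq V] (v w : V) :
    codegCount G v w = #(G.commonNeighborFinset {v, w}) := by
  rw [codegCount, Set.ncard_eq_toFinset_card']
  congr 1
  ext x
  simp [commonNeighborFinset]

lemma interCount_coe_eq_card [DecidableEq V] (S T : Finset V) :
    interCount G S T = #{p ∈ S ×ˢ T | G.Adj p.1 p.2} := by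
  rw [interCount, Set.ncard_eq_toFinset_card']
  congr 1
  ext p
  simp [and_assoc]

end Counting

section SymmetricPairs

variable {V : Type} [DecidableEq V]

lemma card_filter_mk_eq_le_two (P : Finset (V × V)) (e : Sym2 V) :
    #{p ∈ P | s(p.1, p.2) = e} ≤ 2 := by
  induction e using Sym2.ind with | _ x y => ?_
  refine (card_le_card (t := {(x, y), (y, x)}) fun p hp => ?_).trans card_le_two
  rcases Sym2.eq_iff.1 (mem_filter.1 hp).2 with ⟨h1, h2⟩ | ⟨h1, h2⟩ <;> simp [Prod.ext_iff, *]

lemma card_filter_ne_add_card_inter (S T : Finset V) :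
    #{p ∈ S ×ˢ T | p.1 ≠ p.2} + #(S ∩ T) = #S * #T := by
  have hdiag : #{p ∈ S ×ˢ T | p.1 = p.2} = #(S ∩ T) := by
    refine card_bij' (fun p _ => p.1) (fun x _ => (x, x)) ?_ ?_ ?_ ?_
    · rintro ⟨a, b⟩ hp
      obtain ⟨⟨ha, hb⟩, rfl⟩ : (a ∈ S ∧ b ∈ T) ∧ a = b := by simpa using hp
      exact mem_inter.2 ⟨ha, hb⟩
    all_goals simp +contextual [Prod.ext_iff]
  have hsplit := card_filter_add_card_filter_not (s := S ×ˢ T) fun p : V × V => p.1 = p.2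
  rw [hdiag, card_product] at hsplit
  simp only [ne_eq]
  omega

end SymmetricPairs

section RandomGraph

variable {V : Type}

def SimpleGraph.fromIndicator (ω : Sym2 V → Bool) : SimpleGraph V := fromEdgeSet {e | ω e}

lemma fromIndicator_adj {ω : Sym2 V → Bool} {x y : V} :
    (fromIndicator ω).Adj x y ↔ ω s(x, y) ∧ x ≠ y :=
  fromEdgeSet_adj _

variable [Fintype V] [DecidableEq V]

instance (ω : Sym2 V → Bool) : DecidableRel (fromIndicator ω).Adj :=
  fun _ _ => decidable_of_iff _ fromIndicator_adj.symm

lemma card_commonNeighborFinset_fromIndicator (ω : Sym2 V → Bool) (U : Finset V) :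
    (#((fromIndicator ω).commonNeighborFinset U) : ℝ) =
      ∑ x ∈ Uᶜ, ∏ u ∈ U, if ω s(u, x) then 1 else 0 := by
  calc (#((fromIndicator ω).commonNeighborFinset U) : ℝ) = #{x ∈ Uᶜ | ∀ u ∈ U, ω s(u, x)} := by
        congr 2
        ext x
        simp only [commonNeighborFinset, mem_filter, mem_univ, true_and, mem_compl,
          fromIndicator_adj]
        refine ⟨fun h => ⟨fun hx => (h x hx).2 rfl, fun u hu => (h u hu).1⟩,
          fun h u hu => ⟨h.2 u hu, ?_⟩⟩
        rintro rfl
        exact h.1 hu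
    _ = ∑ x ∈ Uᶜ, ∏ u ∈ U, if ω s(u, x) then 1 else 0 := by
        rw [natCast_card_filter]
        exact sum_congr rfl fun x _ => by rw [prod_boole]; congr 1

theorem card_filter_lt_abs_card_commonNeighborFinset_sub_le (U : Finset V) {t : ℝ}
    (ht : 0 ≤ t) :
    #{ω : Sym2 V → Bool | t < |(#((fromIndicator ω).commonNeighborFinset U) : ℝ) -
        (Fintype.card V - #U) / 2 ^ #U|} ≤
      2 * Fintype.card (Sym2 V → Bool) * exp (-(t ^ 2 / (4 * Fintype.card V))) := by
  set F : V → (Sym2 V → Bool) → ℝ :=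
    fun x ω => (∏ u ∈ U, if ω s(u, x) then 1 else 0) - (1 / 2) ^ #U
  have hsum : ∀ ω, (#((fromIndicator ω).commonNeighborFinset U) : ℝ) -
      (Fintype.card V - #U) / 2 ^ #U = ∑ x ∈ Uᶜ, F x ω := fun ω => by
    simp only [F, card_commonNeighborFinset_fromIndicator, sum_sub_distrib, sum_const,
      card_compl, nsmul_eq_mul, Nat.cast_sub (card_le_univ U), one_div, inv_pow]
    ring
  simp_rw [hsum]
  refine card_filter_lt_abs_sum_le Uᶜ (A := fun x => (fun u => s(u, x)) '' U) ?_ ?_ ?_ ?_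
    (k := Fintype.card V) (mod_cast card_le_univ _) ht
  · intro x hx y _ hxy
    refine Set.disjoint_left.2 ?_
    rintro _ ⟨u, hu, rfl⟩ ⟨u', hu', h⟩
    rcases Sym2.eq_iff.1 h with ⟨-, rfl⟩ | ⟨rfl, -⟩
    · exact hxy rfl
    · exact mem_compl.1 hx hu'
  · intro x _ ω₁ ω₂ h
    simp only [F]
    rw [prod_congr rfl fun u hu => by rw [h _ ⟨u, hu, rfl⟩]]
  · intro x _
    simp only [F]
    rw [expect_sub_distrib, expect_prod_boole_eval U fun u _ u' _ h => Sym2.congr_left.1 h,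
      Fintype.expect_const, sub_self]
  · intro x _ ω
    have h0 : 0 ≤ ∏ u ∈ U, (if ω s(u, x) then 1 else 0 : ℝ) :=
      prod_nonneg fun _ _ => by split_ifs <;> norm_num
    have h1 : ∏ u ∈ U, (if ω s(u, x) then 1 else 0 : ℝ) ≤ 1 :=
      prod_le_one (fun _ _ => by split_ifs <;> norm_num) fun _ _ => by split_ifs <;> norm_num
    have h2 : (0 : ℝ) ≤ (1 / 2) ^ #U := by positivity
    have h3 : ((1 : ℝ) / 2) ^ #U ≤ 1 := pow_le_one₀ (by norm_num) (by norm_num)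
    exact abs_sub_le_iff.2 ⟨by linarith, by linarith⟩

theorem card_filter_lt_abs_degCount_sub_le (v : V) {t : ℝ} (ht : 0 ≤ t) :
    #{ω : Sym2 V → Bool | t < |(degCount (fromIndicator ω) v : ℝ) - (Fintype.card V - 1) / 2|} ≤
      2 * Fintype.card (Sym2 V → Bool) * exp (-(t ^ 2 / (4 * Fintype.card V))) := by
  simpa [degCount_eq_card_commonNeighborFinset] using
    card_filter_lt_abs_card_commonNeighborFinset_sub_le {v} ht

theorem card_filter_lt_abs_codegCount_sub_le {v w : V} (hvw : v ≠ w) {t : ℝ} (ht : 0 ≤ t) :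
    #{ω : Sym2 V → Bool |
        t < |(codegCount (fromIndicator ω) v w : ℝ) - (Fintype.card V - 2) / 4|} ≤
      2 * Fintype.card (Sym2 V → Bool) * exp (-(t ^ 2 / (4 * Fintype.card V))) := by
  have h := card_filter_lt_abs_card_commonNeighborFinset_sub_le {v, w} ht
  rw [card_pair hvw, Nat.cast_ofNat, show (2 : ℝ) ^ 2 = 4 by norm_num] at h
  simpa only [codegCount_eq_card_commonNeighborFinset] using h

lemma interCount_fromIndicator (ω : Sym2 V → Bool) (S T : Finset V) :
    (interCount (fromIndicator ω) S T : ℝ) = ∑ e : Sym2 V,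
      (#{p ∈ {p ∈ S ×ˢ T | p.1 ≠ p.2} | s(p.1, p.2) = e} : ℝ) * (if ω e then 1 else 0) :=
  calc (interCount (fromIndicator ω) S T : ℝ)
      = ∑ p ∈ {p ∈ S ×ˢ T | p.1 ≠ p.2}, if ω s(p.1, p.2) then 1 else 0 := by
        rw [interCount_coe_eq_card, natCast_card_filter, sum_filter]
        refine sum_congr rfl fun p _ => ?_
        by_cases hp : p.1 = p.2 <;> simp [fromIndicator_adj, hp]
    _ = ∑ e : Sym2 V, ∑ p ∈ {p ∈ S ×ˢ T | p.1 ≠ p.2} with s(p.1, p.2) = e,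
          if ω e then 1 else 0 := (sum_fiberwise' _ _ fun e => if ω e then 1 else 0).symm
    _ = _ := sum_congr rfl fun e _ => by rw [sum_const, nsmul_eq_mul]

theorem card_filter_lt_abs_interCount_sub_le (S T : Finset V) {t : ℝ} (ht : 0 ≤ t) :
    #{ω : Sym2 V → Bool | t <
        |(interCount (fromIndicator ω) S T : ℝ) - (#S * #T - #(S ∩ T)) / 2|} ≤
      2 * Fintype.card (Sym2 V → Bool) * exp (-(t ^ 2 / (4 * Fintype.card V ^ 2))) := by
  set P := {p ∈ S ×ˢ T | p.1 ≠ p.2}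
  set w : Sym2 V → ℝ := fun e => #{p ∈ P | s(p.1, p.2) = e}
  set F : Sym2 V → (Sym2 V → Bool) → ℝ := fun e ω => w e * ((if ω e then 1 else 0) - 1 / 2)
  have hw : ∑ e, w e = #S * #T - #(S ∩ T) := by
    have hcard : (#P + #(S ∩ T) : ℝ) = #S * #T := mod_cast card_filter_ne_add_card_inter S T
    simp only [w]
    rw [← Nat.cast_sum, ← card_eq_sum_card_fiberwise fun _ _ => mem_univ _]
    linarith
  have hsum : ∀ ω, (interCount (fromIndicator ω) S T : ℝ) - (#S * #T - #(S ∩ T)) / 2 =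
      ∑ e, F e ω := fun ω => by
    simp only [F, interCount_fromIndicator, mul_sub, sum_sub_distrib, ← sum_mul, hw]
    ring
  simp_rw [hsum]
  refine card_filter_lt_abs_sum_le univ (A := fun e => {e}) ?_ ?_ ?_ ?_
    (k := Fintype.card V ^ 2) ?_ ht
  · exact fun e _ e' _ hee' => Set.disjoint_singleton.2 hee'
  · intro e _ ω₁ ω₂ h
    simp only [F, h e rfl]
  · intro e _
    simp only [F]
    rw [← mul_expect, expect_sub_distrib, expect_boole_eval, Fintype.expect_const, sub_self,
      mul_zero]
  · intro e _ ω
    have hw2 : w e ≤ 2 := by simpa [w] using card_filter_mk_eq_le_two P e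
    have hw0 : 0 ≤ w e := Nat.cast_nonneg _
    simp only [F, abs_mul, abs_of_nonneg hw0]
    split_ifs <;> norm_num <;> linarith
  · rw [card_univ, ← Nat.cast_pow, Nat.cast_le, sq, ← Fintype.card_prod]
    exact Fintype.card_le_of_surjective _ Sym2.mk_surjective

end RandomGraph

theorem exists_graph_abs_sub_le (V : Type) [Fintype V] [DecidableEq V] {t₁ t₂ : ℝ}
    (ht₁ : 0 ≤ t₁) (ht₂ : 0 ≤ t₂)
    (h : 2 * (Fintype.card V + Fintype.card V ^ 2) * exp (-(t₁ ^ 2 / (4 * Fintype.card V))) +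
      2 * 4 ^ Fintype.card V * exp (-(t₂ ^ 2 / (4 * Fintype.card V ^ 2))) < 1) :
    ∃ G : SimpleGraph V,
      (∀ v, |(degCount G v : ℝ) - (Fintype.card V - 1) / 2| ≤ t₁) ∧
      (∀ v w, v ≠ w → |(codegCount G v w : ℝ) - (Fintype.card V - 2) / 4| ≤ t₁) ∧
      ∀ S T : Finset V, |(interCount G S T : ℝ) - (#S * #T - #(S ∩ T)) / 2| ≤ t₂ := by
  classical
  set m := Fintype.card V
  set N := Fintype.card (Sym2 V → Bool)
  -- The codegree events on the diagonal are vacuous; keeping them makes the index set a product.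
  let P : V ⊕ (V × V) ⊕ (Finset V × Finset V) → (Sym2 V → Bool) → Prop :=
    Sum.elim (fun v ω => |(degCount (fromIndicator ω) v : ℝ) - (m - 1) / 2| ≤ t₁) <|
      Sum.elim
        (fun p ω => p.1 ≠ p.2 → |(codegCount (fromIndicator ω) p.1 p.2 : ℝ) - (m - 2) / 4| ≤ t₁)
        fun q ω =>
          |(interCount (fromIndicator ω) q.1 q.2 : ℝ) - (#q.1 * #q.2 - #(q.1 ∩ q.2)) / 2| ≤ t₂
  suffices hsum : ∑ i, (#{ω | ¬ P i ω} : ℝ) < N by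
    obtain ⟨ω, hω⟩ := exists_forall_of_sum_card_filter_not_lt P hsum
    exact ⟨fromIndicator ω, fun v => hω (.inl v), fun v w => hω (.inr (.inl (v, w))),
      fun S T => hω (.inr (.inr (S, T)))⟩
  have hcodeg : ∀ p : V × V, (#{ω | ¬ P (.inr (.inl p)) ω} : ℝ) ≤
      2 * N * exp (-(t₁ ^ 2 / (4 * m))) := fun ⟨v, w⟩ => by
    by_cases hvw : v = w
    · simp only [P, Sum.elim_inr, Sum.elim_inl, hvw, ne_eq, not_true_eq_false, false_imp_iff,
        filter_false, card_empty, Nat.cast_zero]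
      positivity
    · simpa only [P, Sum.elim_inr, Sum.elim_inl, Classical.not_imp, hvw, ne_eq,
        not_false_eq_true, true_and, not_le] using card_filter_lt_abs_codegCount_sub_le hvw ht₁
  have sum_le {κ : Type} [Fintype κ] {f : κ → ℝ} {c : ℝ} (hf : ∀ i, f i ≤ c) :
      ∑ i, f i ≤ Fintype.card κ * c :=
    (sum_le_card_nsmul _ _ _ fun i _ => hf i).trans_eq (by rw [nsmul_eq_mul, card_univ])
  calc ∑ i, (#{ω | ¬ P i ω} : ℝ)
      ≤ m * (2 * N * exp (-(t₁ ^ 2 / (4 * m)))) + (m ^ 2 * (2 * N * exp (-(t₁ ^ 2 / (4 * m)))) +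
          4 ^ m * (2 * N * exp (-(t₂ ^ 2 / (4 * m ^ 2))))) := by
        rw [Fintype.sum_sum_type, Fintype.sum_sum_type]
        refine add_le_add (sum_le fun v => ?_) (add_le_add ((sum_le hcodeg).trans_eq ?_)
          ((sum_le (c := 2 * N * exp (-(t₂ ^ 2 / (4 * m ^ 2)))) fun q => ?_).trans_eq ?_))
        · simpa only [P, Sum.elim_inl, not_le] using card_filter_lt_abs_degCount_sub_le v ht₁
        · rw [Fintype.card_prod, Nat.cast_mul]
          ring
        · simpa only [P, Sum.elim_inr, not_le] using
            card_filter_lt_abs_interCount_sub_le q.1 q.2 ht₂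
        · rw [Fintype.card_prod, Fintype.card_finset, Nat.cast_mul, Nat.cast_pow, ← mul_pow]
          norm_num [m]
    _ = N * (2 * (m + m ^ 2) * exp (-(t₁ ^ 2 / (4 * m))) +
          2 * 4 ^ m * exp (-(t₂ ^ 2 / (4 * m ^ 2)))) := by ring
    _ < N := mul_lt_of_lt_one_right (by positivity) h

section Numerics

variable {y : ℝ} {m : ℕ}

lemma two_mul_add_sq_mul_exp_le (hy : 32 ^ 12 * 11 ! ≤ y) (hm : (m : ℝ) = 2 * y ^ 5 - 1) :
    2 * (m + m ^ 2) * exp (-((y ^ 3 / 2) ^ 2 / (4 * m))) ≤ 1 / 2 := by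
  have hy1 : 1 ≤ y := le_trans (by norm_num [Nat.factorial]) hy
  have hy5 : 1 ≤ y ^ 5 := one_le_pow₀ hy1
  have hm1 : (1 : ℝ) ≤ m := by rw [hm]; linarith
  have hexp : y / 32 ≤ (y ^ 3 / 2) ^ 2 / (4 * m) := by
    rw [le_div_iff₀ (by positivity)]
    nlinarith
  have hpoly : 32 * y ^ 10 ≤ exp (y / 32) := by
    refine le_trans ?_ (pow_div_factorial_le_exp (y / 32) (by positivity) 11)
    rw [div_pow, div_div, le_div_iff₀ (by positivity)]
    calc 32 * y ^ 10 * (32 ^ 11 * 11 !) = y ^ 10 * (32 ^ 12 * 11 !) := by ring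
      _ ≤ y ^ 10 * y := by gcongr
      _ = y ^ 11 := by ring
  calc 2 * (m + m ^ 2) * exp (-((y ^ 3 / 2) ^ 2 / (4 * m)))
      ≤ 2 * (8 * y ^ 10) * exp (-(y / 32)) := by
        gcongr
        nlinarith
    _ ≤ 1 / 2 := by
        rw [exp_neg, ← div_eq_mul_inv, div_le_iff₀ (exp_pos _)]
        linarith

lemma two_mul_four_pow_mul_exp_lt (hy : 512 ≤ y) (hm : (m : ℝ) = 2 * y ^ 5 - 1) :
    2 * 4 ^ m * exp (-((y ^ 8 / 2) ^ 2 / (4 * m ^ 2))) < 1 / 2 := by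
  have hy5 : 1 ≤ y ^ 5 := one_le_pow₀ (by linarith)
  have hm1 : (1 : ℝ) ≤ m := by rw [hm]; linarith
  have hexp : y ^ 6 / 64 ≤ (y ^ 8 / 2) ^ 2 / (4 * m ^ 2) := by
    rw [le_div_iff₀ (by positivity)]
    have : (m : ℝ) ^ 2 ≤ 4 * y ^ 10 := by nlinarith
    nlinarith [pow_pos (by linarith : (0 : ℝ) < y) 6]
  have he2 : 4 < exp 2 := by
    rw [show (2 : ℝ) = 1 + 1 by norm_num, exp_add]
    nlinarith [exp_one_gt_d9]
  have hfour : (4 : ℝ) ^ m ≤ exp (4 * y ^ 5) :=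
    calc (4 : ℝ) ^ m ≤ exp 2 ^ m := by gcongr
      _ = exp (2 * m) := by rw [← exp_nat_mul]; ring_nf
      _ ≤ exp (4 * y ^ 5) := exp_le_exp.2 (by linarith)
  have hgap : 4 * y ^ 5 - y ^ 6 / 64 ≤ -2 := by
    nlinarith [pow_pos (by linarith : (0 : ℝ) < y) 5]
  calc 2 * 4 ^ m * exp (-((y ^ 8 / 2) ^ 2 / (4 * m ^ 2)))
      ≤ 2 * exp (4 * y ^ 5) * exp (-(y ^ 6 / 64)) := by gcongr
    _ = 2 * exp (4 * y ^ 5 - y ^ 6 / 64) := by rw [mul_assoc, ← exp_add]; ring_nf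
    _ ≤ 2 * exp (-2) := by gcongr
    _ < 1 / 2 := by
        rw [exp_neg, ← div_eq_mul_inv, div_lt_iff₀ (exp_pos _)]
        linarith

end Numerics

theorem exists_graph_of_card_eq {y : ℝ} (hy : 32 ^ 12 * 11 ! ≤ y) (V : Type) [Fintype V]
    [DecidableEq V] (hV : (Fintype.card V : ℝ) = 2 * y ^ 5 - 1) :
    ∃ G : SimpleGraph V,
      (∀ v, |(degCount G v : ℝ) - y ^ 5| ≤ y ^ 3) ∧
      (∀ v w, v ≠ w → |(codegCount G v w : ℝ) - y ^ 5 / 2| ≤ y ^ 3) ∧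
      ∀ S T : Set V, |(interCount G S T : ℝ) - S.ncard * T.ncard / 2| ≤ y ^ 8 := by
  classical
  have hy512 : 512 ≤ y := le_trans (by norm_num [Nat.factorial]) hy
  have hy3 : 2 ≤ y ^ 3 := by linarith [le_self_pow₀ (by linarith : 1 ≤ y) (by norm_num : 3 ≠ 0)]
  have hy5 : y ^ 5 ≤ y ^ 8 / 2 := by nlinarith [pow_pos (by linarith : (0 : ℝ) < y) 5]
  obtain ⟨G, hdeg, hcodeg, hcut⟩ := exists_graph_abs_sub_le V (t₁ := y ^ 3 / 2)
    (t₂ := y ^ 8 / 2) (by positivity) (by positivity)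
    (by linarith [two_mul_add_sq_mul_exp_le hy hV, two_mul_four_pow_mul_exp_lt hy512 hV])
  refine ⟨G, fun v => ?_, fun v w hvw => ?_, fun S T => ?_⟩
  · have h := hdeg v
    rw [hV, abs_le] at h
    rw [abs_le]
    constructor <;> linarith
  · have h := hcodeg v w hvw
    rw [hV, abs_le] at h
    rw [abs_le]
    constructor <;> linarith
  · have h := hcut S.toFinset T.toFinset
    simp only [Set.coe_toFinset, ← Set.ncard_eq_toFinset_card'] at h
    have h0 : (0 : ℝ) ≤ #(S.toFinset ∩ T.toFinset) := Nat.cast_nonneg _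
    have h1 : (#(S.toFinset ∩ T.toFinset) : ℝ) ≤ 2 * y ^ 5 - 1 := hV ▸ mod_cast card_le_univ _
    rw [abs_le] at h ⊢
    constructor <;> linarith

lemma rpow_eq_rpow_one_fifth_pow {x : ℝ} (hx : 0 ≤ x) :
    x = (x ^ (0.2 : ℝ)) ^ 5 ∧ x ^ (0.6 : ℝ) = (x ^ (0.2 : ℝ)) ^ 3 ∧
      x ^ (1.6 : ℝ) = (x ^ (0.2 : ℝ)) ^ 8 := by
  refine ⟨?_, ?_, ?_⟩ <;> rw [← rpow_natCast, ← rpow_mul hx] <;> norm_num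

/-- For all sufficiently large `n` there exists a graph on `2n-1` vertices with
all degrees within `n^0.6` of `n`, all codegrees within `n^0.6` of `n/2`, and
`|e(S,T) - |S||T|/2| ≤ n^1.6` for all vertex sets `S`, `T`. -/
theorem pseudorandom_graph_exists :
    ∃ n0 : ℕ, ∀ n : ℕ, n0 ≤ n →
    ∃ G : SimpleGraph (Fin (2 * n - 1)),
      (∀ v, |(degCount G v : ℝ) - n| ≤ (n : ℝ) ^ (0.6 : ℝ)) ∧
      (∀ v w, v ≠ w → |(codegCount G v w : ℝ) - n / 2| ≤ (n : ℝ) ^ (0.6 : ℝ)) ∧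
      (∀ S T : Set (Fin (2 * n - 1)),
        |(interCount G S T : ℝ) - S.ncard * T.ncard / 2| ≤ (n : ℝ) ^ (1.6 : ℝ)) := by
  obtain ⟨n₀, hn₀⟩ := Filter.eventually_atTop.1 <|
    ((tendsto_rpow_atTop (by norm_num : (0 : ℝ) < 0.2)).comp
      tendsto_natCast_atTop_atTop).eventually_ge_atTop ((32 : ℝ) ^ 12 * 11 !)
  refine ⟨n₀, fun n hn => ?_⟩
  obtain ⟨hn5, hn06, hn16⟩ := rpow_eq_rpow_one_fifth_pow (Nat.cast_nonneg (α := ℝ) n)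
  set y := (n : ℝ) ^ (0.2 : ℝ)
  have hy : 32 ^ 12 * 11 ! ≤ y := hn₀ n hn
  rw [hn06, hn16, hn5]
  refine exists_graph_of_card_eq hy _ ?_
  have hn1 : 1 ≤ n :=
    Nat.one_le_cast.1 <| hn5 ▸ one_le_pow₀ (le_trans (by norm_num [Nat.factorial]) hy)
  rw [Fintype.card_fin, Nat.cast_sub (by omega), ← hn5]
  push_cast
  ring
end

section
/- For every d > 0 and every ε with 0 < ε < d/100 there exists n' such that the following holds for every graph G and all disjoint vertex subsets V1, V2 with |V1|, |V2| ≥ n': if (V1, V2) is a strongly ε-regular pair of density d, then for every v1 ∈ V1, v2 ∈ V2 and every odd k with 3 ≤ k ≤ 2(1 − 2ε/d)·min(|V1|, |V2|), the graph G contains a path of length k (with k edges) joining v1 and v2 all of whose vertices lie in V1 ∪ V2. -/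
open SimpleGraph

/-!
Reserve a set `S` of about `ε|V1|` neighbours of `v2` in `V1 \ {v1}` and grow a path from `v1`
greedily, alternating between `V1 \ S` and `V2 \ {v2}` two vertices at a time. The endpoint
`y ∈ V2` is kept good: it sees a `(d - ε)`-fraction of the still unused vertices of `V1 \ S`.
By regularity all but `ε|V2|` vertices of `V2` are good, and from a good endpoint there is an
unused neighbour `x` adjacent to a good unused `y'`; the bound on `k` leaves at least
`(2ε/d - ε)|V1|` unused vertices in `V1`, which is what regularity needs. In the last step `y'` is
instead chosen with a neighbour `w ∈ S` (again all but `ε|V2|` vertices qualify), and the path is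
closed through `w` and `v2`.
-/

theorem exists_subset_le_ncard_le_add_one {V : Type} {A : Set V} {r : ℝ} (hr : 0 ≤ r)
    (h : r ≤ A.ncard) : ∃ S ⊆ A, r ≤ S.ncard ∧ (S.ncard : ℝ) ≤ r + 1 := by
  obtain ⟨S, hSA, hS⟩ := Set.exists_subset_card_eq (Nat.ceil_le.2 h)
  exact ⟨S, hSA, hS ▸ Nat.le_ceil r, hS ▸ (Nat.ceil_lt_add_one hr).le⟩

section Counting

variable {V : Type} [Finite V]

theorem ncard_sub_ncard_le_ncard_sdiff (s t : Set V) :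
    (t.ncard : ℝ) - s.ncard ≤ (t \ s).ncard := by
  have := Set.ncard_le_ncard_sdiff_add_ncard t s
  rw [sub_le_iff_le_add]
  exact_mod_cast this

theorem mul_ncard_sdiff_singleton_sub_one_le {F N : Set V} {c : ℝ} (hc : 0 ≤ c)
    (h : c * F.ncard ≤ (F ∩ N).ncard) (x : V) :
    c * (F \ {x}).ncard - 1 ≤ ((F \ {x}) ∩ N).ncard := by
  have hsub : (((F \ {x}).ncard : ℕ) : ℝ) ≤ F.ncard := by
    exact_mod_cast Set.ncard_le_ncard Set.sdiff_subset
  have hdrop := ncard_sub_ncard_le_ncard_sdiff {x} (F ∩ N)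
  rw [Set.ncard_singleton, Nat.cast_one] at hdrop
  rw [Set.sdiff_inter_right_comm]
  nlinarith

theorem ncard_pairs_eq_sum (R : V → V → Prop) (A B : Set V) :
    {p : V × V | p.1 ∈ A ∧ p.2 ∈ B ∧ R p.1 p.2}.ncard =
      ∑ b ∈ (Set.toFinite B).toFinset, {a ∈ A | R a b}.ncard := by
  classical
  rw [Set.ncard_eq_toFinset_card _ (Set.toFinite _),
    Finset.card_eq_sum_card_fiberwise (f := Prod.snd) (t := (Set.toFinite B).toFinset)
      (fun p hp => by simp_all)]
  refine Finset.sum_congr rfl fun b _ => ?_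
  rw [Set.ncard_eq_toFinset_card _ (Set.toFinite _)]
  refine Finset.card_nbij' Prod.fst (fun a => (a, b)) ?_ ?_ ?_ ?_ <;> intro p <;> aesop

variable (G : SimpleGraph V)

noncomputable def nonAdjCount (A B : Set V) : ℕ :=
  {p : V × V | p.1 ∈ A ∧ p.2 ∈ B ∧ ¬G.Adj p.1 p.2}.ncard

theorem interCount_eq_sum (A B : Set V) :
    interCount G A B = ∑ b ∈ (Set.toFinite B).toFinset, (A ∩ G.neighborSet b).ncard := by
  rw [interCount, ncard_pairs_eq_sum]
  congr! 2 with b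
  ext a
  simp [G.adj_comm]

theorem nonAdjCount_eq_sum (A B : Set V) :
    nonAdjCount G A B = ∑ b ∈ (Set.toFinite B).toFinset, (A \ G.neighborSet b).ncard := by
  rw [nonAdjCount, ncard_pairs_eq_sum fun a b => ¬G.Adj a b]
  congr! 2 with b
  ext a
  simp [G.adj_comm]

theorem interCount_add_nonAdjCount (A B : Set V) :
    interCount G A B + nonAdjCount G A B = A.ncard * B.ncard := by
  rw [interCount_eq_sum, nonAdjCount_eq_sum, ← Finset.sum_add_distrib,
    Finset.sum_congr rfl fun b _ => Set.ncard_inter_add_ncard_sdiff_eq_ncard A _,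
    Finset.sum_const, smul_eq_mul, ← Set.ncard_eq_toFinset_card, mul_comm]

theorem nonAdjCount_mono {A A' B B' : Set V} (hA : A ⊆ A') (hB : B ⊆ B') :
    nonAdjCount G A B ≤ nonAdjCount G A' B' :=
  Set.ncard_le_ncard fun _ hp => ⟨hA hp.1, hB hp.2.1, hp.2.2⟩

theorem exists_adj_of_interCount_pos {A B : Set V} (h : 0 < interCount G A B) :
    ∃ a ∈ A, ∃ b ∈ B, G.Adj a b := by
  obtain ⟨p, hpA, hpB, hadj⟩ := (Set.ncard_pos (Set.toFinite _)).1 h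
  exact ⟨p.1, hpA, p.2, hpB, hadj⟩

theorem interCount_lt_mul_of_forall_lt {A B : Set V} (hB : B.Nonempty) {c : ℝ}
    (h : ∀ b ∈ B, ((A ∩ G.neighborSet b).ncard : ℝ) < c) :
    (interCount G A B : ℝ) < c * B.ncard := by
  rw [interCount_eq_sum, Set.ncard_eq_toFinset_card B, mul_comm, ← nsmul_eq_mul,
    ← Finset.sum_const]
  push_cast
  exact Finset.sum_lt_sum_of_nonempty (by simpa using hB) fun b hb => h b (by simpa using hb)

theorem dens_le_one (A B : Set V) : dens G A B ≤ 1 := by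
  have h := interCount_add_nonAdjCount G A B
  exact div_le_one_of_le₀ (by exact_mod_cast (Nat.le.intro h)) (by positivity)

end Counting

def lowDegree {V : Type} (G : SimpleGraph V) (T B : Set V) (c : ℝ) : Set V :=
  {u ∈ B | ((T ∩ G.neighborSet u).ncard : ℝ) < c}

theorem le_of_notMem_lowDegree {V : Type} {G : SimpleGraph V} {T B : Set V} {c : ℝ} {y : V}
    (hy : y ∈ B) (hyL : y ∉ lowDegree G T B c) : c ≤ (T ∩ G.neighborSet y).ncard :=
  not_lt.1 fun h => hyL ⟨hy, h⟩

theorem exists_adj_of_notMem_lowDegree_one {V : Type} {G : SimpleGraph V} {T B : Set V} {y : V}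
    (hy : y ∈ B) (hyL : y ∉ lowDegree G T B 1) : ∃ w ∈ T, G.Adj y w := by
  obtain ⟨w, hwT, hw⟩ := Set.nonempty_of_ncard_ne_zero (s := T ∩ G.neighborSet y)
    fun h => hyL ⟨hy, by rw [h]; norm_num⟩
  exact ⟨w, hwT, hw⟩

namespace IsRegularPair

variable {V : Type} {G : SimpleGraph V} {V1 V2 : Set V} {ε d : ℝ}

theorem mul_ncard_le_interCount (hreg : IsRegularPair G ε V1 V2) (hd : dens G V1 V2 = d)
    {W1 W2 : Set V} (hW1 : W1 ⊆ V1) (hW2 : W2 ⊆ V2)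
    (hW1c : ε * V1.ncard ≤ W1.ncard) (hW2c : ε * V2.ncard ≤ W2.ncard) :
    (d - ε) * (W1.ncard * W2.ncard) ≤ interCount G W1 W2 := by
  have hclose := (abs_le.1 (hreg W1 W2 hW1 hW2 hW1c hW2c)).2
  rw [hd, dens] at hclose
  rcases (by positivity : (0 : ℝ) ≤ W1.ncard * W2.ncard).eq_or_lt with h0 | hpos
  · rw [← h0, mul_zero]
    positivity
  · exact (le_div_iff₀ hpos).1 (by linarith)

variable [Finite V]

theorem ncard_lowDegree_lt (hreg : IsRegularPair G ε V1 V2) (hd : dens G V1 V2 = d)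
    {T : Set V} (hT : T ⊆ V1) (hTc : ε * V1.ncard ≤ T.ncard) {c : ℝ}
    (hc : c ≤ (d - ε) * T.ncard) (hV2 : 0 < ε * V2.ncard) :
    ((lowDegree G T V2 c).ncard : ℝ) < ε * V2.ncard := by
  by_contra! hbig
  have hne : (lowDegree G T V2 c).Nonempty :=
    Set.nonempty_of_ncard_ne_zero fun h => by rw [h, Nat.cast_zero] at hbig; linarith
  have hlow := hreg.mul_ncard_le_interCount hd hT (fun u hu => hu.1) hTc hbig
  have hhigh := interCount_lt_mul_of_forall_lt G hne fun u hu => hu.2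
  nlinarith [mul_le_mul_of_nonneg_right hc (Nat.cast_nonneg (lowDegree G T V2 c).ncard)]

theorem exists_adj (hreg : IsRegularPair G ε V1 V2) (hd : dens G V1 V2 = d) (hεd : ε < d)
    {C D : Set V} (hC : C ⊆ V1) (hD : D ⊆ V2)
    (hCc : ε * V1.ncard ≤ C.ncard) (hDc : ε * V2.ncard ≤ D.ncard)
    (hCpos : 0 < C.ncard) (hDpos : 0 < D.ncard) :
    ∃ x ∈ C, ∃ x' ∈ D, G.Adj x x' := by
  have h := hreg.mul_ncard_le_interCount hd hC hD hCc hDc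
  have hpos : (0 : ℝ) < (d - ε) * (C.ncard * D.ncard) := by
    have : (0 : ℝ) < C.ncard := by exact_mod_cast hCpos
    have : (0 : ℝ) < D.ncard := by exact_mod_cast hDpos
    have : 0 < d - ε := by linarith
    positivity
  exact exists_adj_of_interCount_pos G (by exact_mod_cast hpos.trans_le h)

theorem exists_adj_of_dense (hreg : IsRegularPair G ε V1 V2) (hd : dens G V1 V2 = d)
    {U1 U2 C D : Set V} (hU1 : U1 ⊆ V1) (hU2 : U2 ⊆ V2)
    (hU1c : ε * V1.ncard ≤ U1.ncard) (hU2c : ε * V2.ncard ≤ U2.ncard)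
    (hCU : C ⊆ U1) (hDU : D ⊆ U2)
    (hCD : (1 - d + ε) * (U1.ncard * U2.ncard) < C.ncard * D.ncard) :
    ∃ x ∈ C, ∃ x' ∈ D, G.Adj x x' := by
  have hU := hreg.mul_ncard_le_interCount hd hU1 hU2 hU1c hU2c
  have hUsum : (interCount G U1 U2 + nonAdjCount G U1 U2 : ℝ) = U1.ncard * U2.ncard := by
    exact_mod_cast interCount_add_nonAdjCount G U1 U2
  have hCDsum : (interCount G C D + nonAdjCount G C D : ℝ) = C.ncard * D.ncard := by
    exact_mod_cast interCount_add_nonAdjCount G C D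
  have hmono : (nonAdjCount G C D : ℝ) ≤ nonAdjCount G U1 U2 := by
    exact_mod_cast nonAdjCount_mono G hCU hDU
  have hpos : (0 : ℝ) < interCount G C D := by linarith
  exact exists_adj_of_interCount_pos G (by exact_mod_cast hpos)

theorem exists_adj_adj (hreg : IsRegularPair G ε V1 V2) (hd : dens G V1 V2 = d)
    (hε : 0 < ε) (hεd : 100 * ε < d) (hd1 : d ≤ 1) (hN1 : 100 ≤ ε * V1.ncard)
    {U1 U2 B : Set V} (hU1 : U1 ⊆ V1) (hU2 : U2 ⊆ V2)
    (hU1c : (2 * ε / d - ε) * V1.ncard ≤ U1.ncard) (hU2c : 2 * ε * V2.ncard ≤ U2.ncard)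
    (hB : (B.ncard : ℝ) < ε * V2.ncard) {y : V}
    (hy : (d - ε) * U1.ncard - 1 ≤ (U1 ∩ G.neighborSet y).ncard) :
    ∃ x ∈ U1, ∃ x' ∈ U2 \ B, G.Adj y x ∧ G.Adj x x' := by
  set C := U1 ∩ G.neighborSet y
  have hCU : C ⊆ U1 := Set.inter_subset_left
  have hD : (U2.ncard : ℝ) - ε * V2.ncard < (U2 \ B).ncard :=
    (sub_lt_sub_left hB _).trans_le (ncard_sub_ncard_le_ncard_sdiff B U2)
  have hq : 2 * ε / d < 1 / 50 := by rw [div_lt_iff₀ (by linarith)]; linarith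
  have hN1pos : (0 : ℝ) ≤ V1.ncard := Nat.cast_nonneg _
  have hU1ε : ε * V1.ncard ≤ U1.ncard := by
    nlinarith [le_div_self (by positivity : 0 ≤ 2 * ε) (by linarith) hd1]
  obtain ⟨x, hxC, x', hx'D, hxx'⟩ : ∃ x ∈ C, ∃ x' ∈ U2 \ B, G.Adj x x' := by
    -- For `d ≤ 4/5` the neighbourhood `C` of `y` is `ε`-large and regularity applies to it; for
    -- denser pairs it need not be, but then it fills most of `U1` and counting non-edges works.
    rcases le_or_gt d (4 / 5) with hsparse | hdense
    · have hcoef : 59 / 50 * ε ≤ (d - ε) * (2 * ε / d - ε) := by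
        nlinarith [mul_le_mul_of_nonneg_left hsparse hε.le, mul_lt_mul_of_pos_left hq hε,
          div_mul_cancel₀ (2 * ε) (by linarith : d ≠ 0)]
      have hCc : ε * V1.ncard + 1 ≤ C.ncard := by
        nlinarith [mul_le_mul_of_nonneg_left hU1c (by linarith : (0 : ℝ) ≤ d - ε),
          mul_le_mul_of_nonneg_right hcoef hN1pos]
      refine hreg.exists_adj hd (by linarith) (hCU.trans hU1) (Set.sdiff_subset.trans hU2)
        (by linarith) (by linarith) ?_ ?_
      · exact_mod_cast (by linarith : (0 : ℝ) < C.ncard)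
      · exact_mod_cast (by linarith : (0 : ℝ) < (U2 \ B).ncard)
    · have hU2pos : (0 : ℝ) < U2.ncard := by linarith [(Nat.cast_nonneg B.ncard : (0 : ℝ) ≤ _)]
      have hC : 39 / 50 * (U1.ncard : ℝ) ≤ C.ncard := by nlinarith
      have hD2 : (U2.ncard : ℝ) / 2 ≤ (U2 \ B).ncard := by linarith
      refine hreg.exists_adj_of_dense hd hU1 hU2 hU1ε (by nlinarith) hCU Set.sdiff_subset ?_
      nlinarith [mul_le_mul hC hD2 (by positivity) (Nat.cast_nonneg _), mul_pos
        (by linarith : (0 : ℝ) < U1.ncard) hU2pos]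
  exact ⟨x, hxC.1, x', hx'D, hxC.2, hxx'⟩

end IsRegularPair

section BalancedPath

variable {V : Type} {G : SimpleGraph V}

structure IsBalancedPath (A B : Set V) (i : ℕ) {u v : V} (p : G.Walk u v) : Prop where
  isPath : p.IsPath
  length_eq : p.length = 2 * i + 1
  end_mem : v ∈ B
  support_subset : ∀ x ∈ p.support, x ∈ A ∪ B
  ncard_left : (A ∩ {x | x ∈ p.support}).ncard = i + 1
  ncard_right : (B ∩ {x | x ∈ p.support}).ncard = i + 1

variable {A B : Set V} {i : ℕ} {u v x x' : V}

theorem setOf_mem_support_concat_concat (p : G.Walk u v) (h : G.Adj v x) (h' : G.Adj x x') :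
    {z | z ∈ ((p.concat h).concat h').support} = insert x' (insert x {z | z ∈ p.support}) := by
  ext z
  simp only [Walk.support_concat, List.mem_append, List.mem_singleton, Set.mem_insert_iff]
  exact or_comm.trans (or_congr_right or_comm)

theorem isBalancedPath_cons_nil (hAB : Disjoint A B) (hu : u ∈ A) (hv : v ∈ B) (h : G.Adj u v) :
    IsBalancedPath A B 0 (Walk.cons h Walk.nil) := by
  have hsupp : {z | z ∈ (Walk.cons h Walk.nil).support} = {u, v} := by
    ext z
    simp
  have hvA : v ∉ A := Set.disjoint_right.1 hAB hv
  have huB : u ∉ B := Set.disjoint_left.1 hAB hu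
  refine ⟨by simp [h.ne], rfl, hv, ?_, ?_, ?_⟩
  · simp [hu, hv]
  · rw [hsupp, Set.inter_insert_of_mem hu, Set.inter_singleton_eq_empty.2 hvA]
    simp
  · rw [hsupp, Set.inter_insert_of_notMem huB, Set.inter_singleton_of_mem hv,
      Set.ncard_singleton]

theorem IsBalancedPath.concat_concat (hAB : Disjoint A B) {p : G.Walk u v}
    (hp : IsBalancedPath A B i p) (hx : x ∈ A) (hx' : x' ∈ B) (hxp : x ∉ p.support)
    (hx'p : x' ∉ p.support) (h : G.Adj v x) (h' : G.Adj x x') :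
    IsBalancedPath A B (i + 1) ((p.concat h).concat h') := by
  have hx'A : x' ∉ A := Set.disjoint_right.1 hAB hx'
  have hxB : x ∉ B := Set.disjoint_left.1 hAB hx
  refine ⟨(hp.isPath.concat hxp h).concat ?_ h', ?_, hx', ?_, ?_, ?_⟩
  · simp only [Walk.support_concat, List.mem_append, List.mem_singleton, not_or]
    exact ⟨hx'p, fun he => hxB (he ▸ hx')⟩
  · rw [Walk.length_concat, Walk.length_concat, hp.length_eq]
    ring
  · intro z hz
    simp only [Walk.support_concat, List.mem_append, List.mem_singleton] at hz
    rcases hz with (hz | rfl) | rfl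
    · exact hp.support_subset z hz
    · exact Or.inl hx
    · exact Or.inr hx'
  · rw [setOf_mem_support_concat_concat, Set.inter_insert_of_notMem hx'A,
      Set.inter_insert_of_mem hx, Set.ncard_insert_of_notMem (fun h => hxp h.2)
        ((List.finite_toSet _).inter_of_right _), hp.ncard_left]
  · rw [setOf_mem_support_concat_concat, Set.inter_insert_of_mem hx',
      Set.inter_insert_of_notMem hxB, Set.ncard_insert_of_notMem (fun h => hx'p h.2)
        ((List.finite_toSet _).inter_of_right _), hp.ncard_right]

theorem IsBalancedPath.ncard_sdiff_left [Finite V] {p : G.Walk u v}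
    (hp : IsBalancedPath A B i p) : (A \ {x | x ∈ p.support}).ncard + (i + 1) = A.ncard := by
  rw [← hp.ncard_left, add_comm, Set.ncard_inter_add_ncard_sdiff_eq_ncard]

theorem IsBalancedPath.ncard_sdiff_right [Finite V] {p : G.Walk u v}
    (hp : IsBalancedPath A B i p) : (B \ {x | x ∈ p.support}).ncard + (i + 1) = B.ncard := by
  rw [← hp.ncard_right, add_comm, Set.ncard_inter_add_ncard_sdiff_eq_ncard]

theorem IsBalancedPath.exists_isPath_length_add_two {V1 V2 S : Set V} {w z : V}
    {p : G.Walk u v} (hp : IsBalancedPath (V1 \ S) (V2 \ {z}) i p) (hdisj : Disjoint V1 V2)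
    (hw : w ∈ S) (hSV1 : S ⊆ V1) (hz : z ∈ V2) (h : G.Adj v w) (h' : G.Adj w z) :
    ∃ q : G.Walk u z, q.IsPath ∧ q.length = 2 * i + 3 ∧ ∀ x ∈ q.support, x ∈ V1 ∪ V2 := by
  have hwV2 : w ∉ V2 := Set.disjoint_left.1 hdisj (hSV1 hw)
  have hzV1 : z ∉ V1 := Set.disjoint_right.1 hdisj hz
  have hwp : w ∉ p.support := fun hm => by
    rcases hp.support_subset w hm with h1 | h2
    exacts [h1.2 hw, hwV2 h2.1]
  have hzp : z ∉ p.support := fun hm => by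
    rcases hp.support_subset z hm with h1 | h2
    exacts [hzV1 h1.1, h2.2 rfl]
  refine ⟨(p.concat h).concat h', (hp.isPath.concat hwp h).concat ?_ h', ?_, ?_⟩
  · simp only [Walk.support_concat, List.mem_append, List.mem_singleton, not_or]
    exact ⟨hzp, fun he => hzV1 (he ▸ hSV1 hw)⟩
  · rw [Walk.length_concat, Walk.length_concat, hp.length_eq]
  · intro x hx
    simp only [Walk.support_concat, List.mem_append, List.mem_singleton] at hx
    rcases hx with (hx | rfl) | rfl
    · rcases hp.support_subset x hx with h1 | h2
      exacts [Or.inl h1.1, Or.inr h2.1]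
    · exact Or.inl (hSV1 hw)
    · exact Or.inr hz

end BalancedPath

section FreeVertices

variable {V : Type} [Finite V] {G : SimpleGraph V} {V1 V2 S : Set V} {ε d : ℝ} {i t : ℕ}
  {u y z : V} {p : G.Walk u y}

theorem IsBalancedPath.le_ncard_sdiff_left {B : Set V} (hp : IsBalancedPath (V1 \ S) B i p)
    (hS : S ⊆ V1) (hShi : (S.ncard : ℝ) ≤ ε * V1.ncard + 1) (hit : i < t)
    (ht : (2 * t + 3 : ℝ) ≤ 2 * (1 - 2 * ε / d) * V1.ncard) :
    (2 * ε / d - ε) * V1.ncard ≤ ((V1 \ S) \ {x | x ∈ p.support}).ncard := by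
  have hcard : (((V1 \ S) \ {x | x ∈ p.support}).ncard + (i + 1) + S.ncard : ℝ) = V1.ncard := by
    exact_mod_cast (congrArg (· + S.ncard) hp.ncard_sdiff_left).trans
      (Set.ncard_sdiff_add_ncard_of_subset hS)
  have hit' : (i + 1 : ℝ) ≤ t := by exact_mod_cast hit
  linarith

theorem IsBalancedPath.le_ncard_sdiff_right {A : Set V} (hp : IsBalancedPath A (V2 \ {z}) i p)
    (hz : z ∈ V2) (hd : 0 < d) (hd1 : d ≤ 1) (hε : 0 ≤ ε) (hit : i < t)
    (ht : (2 * t + 3 : ℝ) ≤ 2 * (1 - 2 * ε / d) * V2.ncard) :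
    2 * ε * V2.ncard ≤ ((V2 \ {z}) \ {x | x ∈ p.support}).ncard := by
  have hcard : (((V2 \ {z}) \ {x | x ∈ p.support}).ncard + (i + 1) + 1 : ℝ) = V2.ncard := by
    exact_mod_cast (congrArg (· + 1) hp.ncard_sdiff_right).trans
      (Set.ncard_sdiff_singleton_add_one hz)
  have hit' : (i + 1 : ℝ) ≤ t := by exact_mod_cast hit
  have hq : 2 * ε ≤ 2 * ε / d := le_div_self (by positivity) hd hd1
  nlinarith [mul_le_mul_of_nonneg_right hq (Nat.cast_nonneg V2.ncard : (0 : ℝ) ≤ _)]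

end FreeVertices

namespace IsRegularPair

variable {V : Type} [Finite V] {G : SimpleGraph V} {V1 V2 : Set V} {ε d : ℝ}

theorem exists_isBalancedPath_zero (hreg : IsRegularPair G ε V1 V2) (hd : dens G V1 V2 = d)
    (hdisj : Disjoint V1 V2) {A1 A2 B : Set V} (hA1 : A1 ⊆ V1) (hA2 : A2 ⊆ V2) {u : V}
    (hu : u ∈ A1) (hA1c : ε * V1.ncard ≤ (A1 \ {u}).ncard) (hB : (B.ncard : ℝ) < ε * V2.ncard)
    (hdeg : 2 * ε * V2.ncard ≤ (G.neighborSet u ∩ A2).ncard) :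
    ∃ (y : V) (p : G.Walk u y), IsBalancedPath A1 A2 0 p ∧ y ∉ B ∧
      (d - ε) * (A1 \ {x | x ∈ p.support}).ncard ≤
        ((A1 \ {x | x ∈ p.support}) ∩ G.neighborSet y).ncard := by
  set L := lowDegree G (A1 \ {u}) V2 ((d - ε) * (A1 \ {u}).ncard)
  have hL : (L.ncard : ℝ) < ε * V2.ncard :=
    hreg.ncard_lowDegree_lt hd (Set.sdiff_subset.trans hA1) hA1c le_rfl
      (by linarith [(Nat.cast_nonneg B.ncard : (0 : ℝ) ≤ _)])
  have hLB : ((L ∪ B).ncard : ℝ) ≤ L.ncard + B.ncard := by exact_mod_cast Set.ncard_union_le L B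
  have hlt : ((L ∪ B).ncard : ℝ) < (G.neighborSet u ∩ A2).ncard := by linarith
  obtain ⟨y, hy, hyLB⟩ := Set.exists_mem_notMem_of_ncard_lt_ncard (by exact_mod_cast hlt)
  have hadj : G.Adj u y := hy.1
  have hyA1 : y ∉ A1 := Set.disjoint_right.1 (hdisj.mono hA1 hA2) hy.2
  have hfree : A1 \ {x | x ∈ (Walk.cons hadj Walk.nil).support} = A1 \ {u} := by
    rw [show {x | x ∈ (Walk.cons hadj Walk.nil).support} = {y, u} by
        ext z; simp only [Walk.support_cons, Walk.support_nil]; simp [or_comm],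
      Set.sdiff_insert_of_notMem hyA1]
  refine ⟨y, _, isBalancedPath_cons_nil (hdisj.mono hA1 hA2) hu hy.2 hadj,
    fun h => hyLB (Or.inr h), ?_⟩
  rw [hfree]
  exact le_of_notMem_lowDegree (hA2 hy.2) fun h => hyLB (Or.inl h)

theorem exists_isBalancedPath_succ (hreg : IsRegularPair G ε V1 V2) (hd : dens G V1 V2 = d)
    (hε : 0 < ε) (hεd : 100 * ε < d) (hd1 : d ≤ 1) (hN1 : 100 ≤ ε * V1.ncard)
    (hdisj : Disjoint V1 V2) {A1 A2 B : Set V} (hA1 : A1 ⊆ V1) (hA2 : A2 ⊆ V2) {i : ℕ}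
    {u y : V} {p : G.Walk u y} (hp : IsBalancedPath A1 A2 i p)
    (hF1 : (2 * ε / d - ε) * V1.ncard ≤ (A1 \ {x | x ∈ p.support}).ncard)
    (hF2 : 2 * ε * V2.ncard ≤ (A2 \ {x | x ∈ p.support}).ncard)
    (hB : (B.ncard : ℝ) < ε * V2.ncard)
    (hy : (d - ε) * (A1 \ {x | x ∈ p.support}).ncard - 1 ≤
      ((A1 \ {x | x ∈ p.support}) ∩ G.neighborSet y).ncard) :
    ∃ (x y' : V) (p' : G.Walk u y'), IsBalancedPath A1 A2 (i + 1) p' ∧ y' ∉ B ∧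
      A1 \ {z | z ∈ p'.support} = (A1 \ {z | z ∈ p.support}) \ {x} := by
  obtain ⟨x, hx, x', hx', hyx, hxx'⟩ := hreg.exists_adj_adj hd hε hεd hd1 hN1
    (Set.sdiff_subset.trans hA1) (Set.sdiff_subset.trans hA2) hF1 hF2 hB hy
  have hAB := hdisj.mono hA1 hA2
  refine ⟨x, x', _, hp.concat_concat hAB hx.1 hx'.1.1 hx.2 hx'.1.2 hyx hxx', hx'.2, ?_⟩
  rw [setOf_mem_support_concat_concat, Set.sdiff_insert_of_notMem
    (Set.disjoint_right.1 hAB hx'.1.1), Set.sdiff_sdiff, Set.union_singleton]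

theorem exists_isBalancedPath (hreg : IsRegularPair G ε V1 V2) (hd : dens G V1 V2 = d)
    (hε : 0 < ε) (hεd : 100 * ε < d) (hd1 : d ≤ 1) (hN1 : 1 ≤ ε ^ 2 * V1.ncard)
    (hN2 : 1 ≤ ε ^ 2 * V2.ncard) (hdisj : Disjoint V1 V2) {S : Set V} (hS : S ⊆ V1)
    (hSlo : ε * V1.ncard ≤ S.ncard) (hShi : (S.ncard : ℝ) ≤ ε * V1.ncard + 1) {v1 v2 : V}
    (hv1 : v1 ∈ V1 \ S) (hv2 : v2 ∈ V2) (hdeg : d * V2.ncard / 10 ≤ (G.neighborSet v1 ∩ V2).ncard)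
    {t : ℕ} (ht : (2 * t + 3 : ℝ) ≤ 2 * (1 - 2 * ε / d) * min (V1.ncard : ℝ) V2.ncard) :
    ∀ i ≤ t, ∃ (y : V) (p : G.Walk v1 y), IsBalancedPath (V1 \ S) (V2 \ {v2}) i p ∧
      (i < t → (d - ε) * ((V1 \ S) \ {x | x ∈ p.support}).ncard - 1 ≤
        (((V1 \ S) \ {x | x ∈ p.support}) ∩ G.neighborSet y).ncard) ∧
      (i = t → ∃ w ∈ S, G.Adj y w) := by
  have hε1 : 100 ≤ ε * V1.ncard := by nlinarith
  have hε2 : 100 ≤ ε * V2.ncard := by nlinarith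
  have hq : 0 ≤ 1 - 2 * ε / d := by
    rw [sub_nonneg, div_le_one (by linarith)]
    linarith
  have ht1 := ht.trans (mul_le_mul_of_nonneg_left (min_le_left _ _) (by linarith))
  have ht2 := ht.trans (mul_le_mul_of_nonneg_left (min_le_right _ _) (by linarith))
  have hbadS : ((lowDegree G S V2 1).ncard : ℝ) < ε * V2.ncard :=
    hreg.ncard_lowDegree_lt hd hS hSlo (by nlinarith) (by linarith)
  intro i
  induction i with
  | zero =>
    intro _
    have hA1 : (((V1 \ S) \ {v1}).ncard + 1 + S.ncard : ℝ) = V1.ncard := by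
      exact_mod_cast (congrArg (· + S.ncard) (Set.ncard_sdiff_singleton_add_one hv1)).trans
        (Set.ncard_sdiff_add_ncard_of_subset hS)
    have hdeg' := ncard_sub_ncard_le_ncard_sdiff {v2} (G.neighborSet v1 ∩ V2)
    rw [Set.ncard_singleton, Nat.cast_one, Set.inter_sdiff_assoc] at hdeg'
    obtain ⟨y, p, hp, hyB, hgood⟩ := hreg.exists_isBalancedPath_zero hd hdisj
      Set.sdiff_subset Set.sdiff_subset hv1 (by nlinarith) hbadS (by nlinarith)
    exact ⟨y, p, hp, fun _ => by linarith,
      fun _ => exists_adj_of_notMem_lowDegree_one hp.end_mem.1 hyB⟩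
  | succ i ih =>
    intro hi
    obtain ⟨y, p, hp, hgood, -⟩ := ih (by omega)
    have hF1 := hp.le_ncard_sdiff_left hS hShi hi ht1
    set F := (V1 \ S) \ {x | x ∈ p.support}
    have hbadF : ((lowDegree G F V2 ((d - ε) * F.ncard)).ncard : ℝ) < ε * V2.ncard :=
      hreg.ncard_lowDegree_lt hd (Set.sdiff_subset.trans Set.sdiff_subset)
        (by nlinarith [le_div_self (by positivity : 0 ≤ 2 * ε) (by linarith) hd1]) le_rfl
        (by linarith)
    obtain ⟨x, y', p', hp', hy'B, hfree⟩ := hreg.exists_isBalancedPath_succ hd hε hεd hd1 hε1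
      hdisj Set.sdiff_subset Set.sdiff_subset hp hF1
      (hp.le_ncard_sdiff_right hv2 (by linarith) hd1 hε.le hi ht2)
      (B := if i + 1 = t then lowDegree G S V2 1 else lowDegree G F V2 ((d - ε) * F.ncard))
      (by split_ifs <;> assumption) (hgood hi)
    refine ⟨y', p', hp', fun hlt => ?_, fun heq => ?_⟩
    · -- `y'` was chosen good for `F` before `x` left it, hence the `- 1` in the invariant.
      rw [if_neg hlt.ne] at hy'B
      rw [hfree]
      exact mul_ncard_sdiff_singleton_sub_one_le (by linarith)
        (le_of_notMem_lowDegree hp'.end_mem.1 hy'B) x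
    · rw [if_pos heq] at hy'B
      exact exists_adj_of_notMem_lowDegree_one hp'.end_mem.1 hy'B

end IsRegularPair

/-- For every `d > 0` and `0 < ε < d/100` there exists `n'` such that in every
strongly `ε`-regular pair `(V1, V2)` of density `d` with `|V1|, |V2| ≥ n'`, any `v1 ∈ V1`
and `v2 ∈ V2` are joined by a path of any odd length `k` with
`3 ≤ k ≤ 2(1 - 2ε/d)·min(|V1|,|V2|)`, all of whose vertices lie in `V1 ∪ V2`. -/
theorem strongly_regular_odd_paths :
    ∀ d : ℝ, 0 < d → ∀ ε : ℝ, 0 < ε → ε < d / 100 →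
    ∃ n' : ℕ, ∀ (V : Type) [Finite V], ∀ (G : SimpleGraph V) (V1 V2 : Set V),
      Disjoint V1 V2 → n' ≤ V1.ncard → n' ≤ V2.ncard →
      IsStronglyRegularPair G ε V1 V2 → dens G V1 V2 = d →
      ∀ v1 ∈ V1, ∀ v2 ∈ V2, ∀ k : ℕ, Odd k → 3 ≤ k →
        (k : ℝ) ≤ 2 * (1 - 2 * ε / d) * min (V1.ncard : ℝ) (V2.ncard : ℝ) →
        ∃ p : G.Walk v1 v2, p.IsPath ∧ p.length = k ∧ ∀ x ∈ p.support, x ∈ V1 ∪ V2 := by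
  intro d hd ε hε hεd
  refine ⟨⌈(ε ^ 2)⁻¹⌉₊, fun V _ G V1 V2 hdisj hn1 hn2 ⟨hreg, hdeg1, hdeg2⟩ hdens v1 hv1 v2 hv2
    k hk hk3 hkle => ?_⟩
  have hN : ∀ n : ℕ, ⌈(ε ^ 2)⁻¹⌉₊ ≤ n → 1 ≤ ε ^ 2 * n := fun n hn =>
    (inv_le_iff_one_le_mul₀' (by positivity)).1 ((Nat.le_ceil _).trans (Nat.cast_le.2 hn))
  have hd1 : d ≤ 1 := hdens ▸ dens_le_one G V1 V2
  have hε1 : 100 ≤ ε * V1.ncard := by nlinarith [hN _ hn1]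
  rw [hdens] at hdeg1 hdeg2
  obtain ⟨t, rfl⟩ : ∃ t, k = 2 * t + 3 := by
    obtain ⟨m, rfl⟩ := hk
    exact ⟨m - 1, by omega⟩
  have hv2deg := ncard_sub_ncard_le_ncard_sdiff {v1} (G.neighborSet v2 ∩ V1)
  rw [Set.ncard_singleton, Nat.cast_one] at hv2deg
  obtain ⟨S, hSsub, hSlo, hShi⟩ := exists_subset_le_ncard_le_add_one (by positivity)
    (by nlinarith [hdeg2 v2 hv2] : ε * V1.ncard ≤ ((G.neighborSet v2 ∩ V1) \ {v1}).ncard)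
  have hSV1 : S ⊆ V1 := fun w hw => (hSsub hw).1.2
  obtain ⟨y, p, hp, -, hyS⟩ := hreg.exists_isBalancedPath hdens hε (by linarith) hd1 (hN _ hn1)
    (hN _ hn2) hdisj hSV1 hSlo hShi ⟨hv1, fun h => (hSsub h).2 rfl⟩ hv2 (hdeg1 v1 hv1)
    (by push_cast at hkle; exact hkle) t le_rfl
  obtain ⟨w, hwS, hyw⟩ := hyS rfl
  exact hp.exists_isPath_length_add_two hdisj hwS hSV1 hv2 hyw (hSsub hwS).1.1.symm
end

section
/- For every positive real ε ≤ 10^{-5} and every integer s ≥ 1/√ε the following holds. Let G be a graph on s vertices with at least s(s−1)/2 − ε s² edges whose edge set is partitioned into two graphs B (blue) and R (red). If R does not have property M_{(1/2+13ε)s} and B contains no triangle, then there exist disjoint vertex sets W1, W2 with |W1|, |W2| ≥ (1/2 − 13√ε)s such that every blue edge with both ends in W1 ∪ W2 has one end in W1 and the other in W2 (i.e., B induces a bipartite subgraph on W1 ∪ W2 with bipartition (W1, W2)). -/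
open SimpleGraph

/-!
If a blue edge `uv` joins two vertices of blue degree at least `(1/2 - 13√ε)s`, then, `B` being
triangle-free, `W₁ = N_B(u)` and `W₂ = N_B(v)` work. Otherwise the vertices of large blue degree
span no blue edge, and we build a red matching witnessing `M_t`, `t = (1/2 + 13ε)s`.

Put `σ = √ε`. Since `G` misses at most `σ²s²` edges, all but `2σs` vertices are typical: they miss
at most `σs` edges of `G`. A typical vertex of red degree below `δ = (1/2 + 12σ)s - 1` has large
blue degree. Any two vertices of red degree `≥ δ` have a common red neighbour.
* If at least `t` vertices have red degree `≥ δ`, they lie in one red component, which cannot be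
  bipartite (both sides would need `δ` vertices, or one side all of them), and a greedy matching
  covers them or has `δ ≥ t` vertices.
* Otherwise the set `H` of typical vertices of red degree `< δ` has about `s/2` vertices and spans
  no blue edge, so red non-edges inside `H` are non-edges of `G`. Hence all but `σs + 1` vertices of
  `H` lie in the red component of one of them, where red independent sets have at most `σs + 1`
  vertices. This component is not bipartite, contains every vertex of red degree `≥ δ`, and a
  greedy matching that covers those and leaves an independent part of `H` uncovered has at least
  `t` vertices.
-/

open Finset

theorem Finset.card_filter_lt_mul_le_sum {ι : Type} (s : Finset ι) {f : ι → ℝ}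
    (hf : ∀ i, 0 ≤ f i) (a : ℝ) : #(s.filter (a < f ·)) * a ≤ ∑ i ∈ s, f i :=
  calc #(s.filter (a < f ·)) * a ≤ ∑ i ∈ s.filter (a < f ·), f i := by
        simpa using card_nsmul_le_sum _ f a fun i hi ↦ (mem_filter.mp hi).2.le
    _ ≤ ∑ i ∈ s, f i := sum_le_sum_of_subset_of_nonneg (filter_subset _ _) fun i _ _ ↦ hf i

namespace SimpleGraph

variable {V : Type}

theorem CliqueFree.isBipartition_neighborSet_of_adj {B : SimpleGraph V} (hB : B.CliqueFree 3)
    {u v : V} (huv : B.Adj u v) :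
    Disjoint (B.neighborSet u) (B.neighborSet v) ∧
      ∀ x y, x ∈ B.neighborSet u ∪ B.neighborSet v → y ∈ B.neighborSet u ∪ B.neighborSet v →
        B.Adj x y → (x ∈ B.neighborSet u ∧ y ∈ B.neighborSet v) ∨
          (x ∈ B.neighborSet v ∧ y ∈ B.neighborSet u) := by
  classical
  have hindep := B.isIndepSet_neighborSet_of_triangleFree hB
  refine ⟨Set.disjoint_left.mpr fun w hwu hwv ↦
    hB {u, v, w} (is3Clique_triple_iff.mpr ⟨huv, hwu, hwv⟩), ?_⟩
  rintro x y (hx | hx) (hy | hy) hxy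
  · exact (hindep u hx hy hxy.ne hxy).elim
  · exact .inl ⟨hx, hy⟩
  · exact .inr ⟨hx, hy⟩
  · exact (hindep v hx hy hxy.ne hxy).elim

theorem ncard_neighborSet [Fintype V] (G : SimpleGraph V) [DecidableRel G.Adj] (v : V) :
    (G.neighborSet v).ncard = G.degree v := by
  rw [← card_neighborFinset_eq_degree, ← Set.ncard_coe_finset, coe_neighborFinset]

theorem degree_sup_of_disjoint [Fintype V] [DecidableEq V] {B R : SimpleGraph V}
    [DecidableRel B.Adj] [DecidableRel R.Adj] [DecidableRel (B ⊔ R).Adj] (h : Disjoint B R)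
    (v : V) : (B ⊔ R).degree v = B.degree v + R.degree v := by
  have hdisj : Disjoint (B.neighborFinset v) (R.neighborFinset v) := by
    refine Finset.disjoint_left.mpr fun w hB hR ↦ ?_
    have : (B ⊓ R).Adj v w := ⟨(mem_neighborFinset ..).mp hB, (mem_neighborFinset ..).mp hR⟩
    simp [disjoint_iff.mp h] at this
  rw [← card_neighborFinset_eq_degree, ← card_neighborFinset_eq_degree,
    ← card_neighborFinset_eq_degree, ← card_union_of_disjoint hdisj]
  congr 1
  ext w
  simp

theorem cast_degree_compl [Fintype V] [DecidableEq V] (G : SimpleGraph V) [DecidableRel G.Adj]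
    (v : V) : (Gᶜ.degree v : ℝ) = Fintype.card V - 1 - G.degree v := by
  have := G.degree_lt_card_verts v
  rw [degree_compl, Nat.cast_sub (by omega), Nat.cast_sub (by omega)]
  simp

theorem sum_degree_compl_le [Fintype V] [DecidableEq V] (G : SimpleGraph V) [DecidableRel G.Adj]
    {ε : ℝ} (hG : (Fintype.card V : ℝ) * (Fintype.card V - 1) / 2 - ε * Fintype.card V ^ 2
      ≤ G.edgeSet.ncard) :
    ∑ v, (Gᶜ.degree v : ℝ) ≤ 2 * ε * Fintype.card V ^ 2 := by
  have hsum : ∑ v, (G.degree v : ℝ) = 2 * G.edgeSet.ncard := by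
    rw [← coe_edgeFinset, Set.ncard_coe_finset]
    exact_mod_cast G.sum_degrees_eq_twice_card_edges
  simp only [cast_degree_compl, sum_sub_distrib, sum_const, card_univ, nsmul_eq_mul, hsum]
  linarith

theorem card_le_degree_compl_add_one [Fintype V] [DecidableEq V] (G : SimpleGraph V)
    [DecidableRel G.Adj] {S : Finset V} {u : V} (hS : ∀ v ∈ S, v ≠ u → ¬ G.Adj u v) :
    #S ≤ Gᶜ.degree u + 1 :=
  calc #S ≤ #(insert u (Gᶜ.neighborFinset u)) := by
        refine card_le_card fun v hv ↦ ?_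
        by_cases hvu : v = u
        · simp [hvu]
        · simp [compl_adj, Ne.symm hvu, hS v hv hvu]
    _ ≤ Gᶜ.degree u + 1 := by
        rw [← card_neighborFinset_eq_degree]
        exact card_insert_le _ _

theorem exists_adj_notMem_of_ncard_lt_degree [Fintype V] {R : SimpleGraph V} [DecidableRel R.Adj]
    {X : Set V} {u : V} (h : X.ncard < R.degree u) : ∃ w, R.Adj u w ∧ w ∉ X := by
  by_contra! hX
  have := Set.ncard_le_ncard (show R.neighborSet u ⊆ X from hX)
  rw [ncard_neighborSet] at this
  omega

theorem reachable_of_card_lt_card_add_degree [Fintype V] [DecidableEq V] {R : SimpleGraph V}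
    [DecidableRel R.Adj] {u v : V} {S : Finset V} (hS : ∀ w ∈ S, R.Reachable u w)
    (h : Fintype.card V < #S + R.degree v) : R.Reachable u v := by
  obtain ⟨w, hwS, hwv⟩ : ∃ w ∈ S, w ∈ R.neighborFinset v := by
    by_contra! hdisj
    have := card_union_of_disjoint (Finset.disjoint_left.mpr hdisj)
    rw [card_neighborFinset_eq_degree] at this
    have := card_le_univ (S ∪ R.neighborFinset v)
    omega
  exact (hS w hwS).trans ((mem_neighborFinset ..).mp hwv).symm.reachable

theorem exists_isIndepSet_cover_of_colorable [Fintype V] {R : SimpleGraph V}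
    {c : R.ConnectedComponent} (h : (R.induce c.supp).Colorable 2) :
    ∃ X Y : Finset V, Disjoint X Y ∧ (∀ v ∈ c.supp, v ∈ X ∨ v ∈ Y) ∧
      R.IsIndepSet (X : Set V) ∧ R.IsIndepSet (Y : Set V) := by
  classical
  obtain ⟨C⟩ := h
  let colorClass (i : Fin 2) : Finset V := univ.filter fun v ↦ ∃ hv : v ∈ c.supp, C ⟨v, hv⟩ = i
  have hindep (i : Fin 2) : R.IsIndepSet (colorClass i : Set V) := by
    intro x hx y hy _ hadj
    simp only [colorClass, coe_filter, mem_univ, true_and, Set.mem_ofPred_eq] at hx hy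
    obtain ⟨hx, rfl⟩ := hx
    obtain ⟨hy, hxy⟩ := hy
    exact C.valid (by simpa using hadj) hxy.symm
  refine ⟨colorClass 0, colorClass 1, Finset.disjoint_left.mpr fun v h0 h1 ↦ ?_, fun v hv ↦ ?_,
    hindep 0, hindep 1⟩
  · simp only [colorClass, mem_filter, mem_univ, true_and] at h0 h1
    obtain ⟨_, h0⟩ := h0
    obtain ⟨_, h1⟩ := h1
    exact absurd (h0.symm.trans h1) (by decide)
  · simp only [colorClass, mem_filter, mem_univ, true_and, exists_prop_of_true hv]
    omega

theorem degree_le_card_of_isIndepSet_cover [Fintype V] {R : SimpleGraph V} [DecidableRel R.Adj]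
    {c : R.ConnectedComponent} {X Y : Finset V} (hcover : ∀ v ∈ c.supp, v ∈ X ∨ v ∈ Y)
    (hX : R.IsIndepSet (X : Set V)) {u : V} (hu : u ∈ c.supp) (huX : u ∈ X) :
    R.degree u ≤ #Y := by
  rw [← card_neighborFinset_eq_degree]
  refine card_le_card fun w hw ↦ ?_
  rw [mem_neighborFinset] at hw
  refine (hcover w (c.mem_supp_of_adj_mem_supp hu hw)).resolve_left fun hwX ↦ ?_
  exact hX huX hwX hw.ne hw

theorem not_colorable_two_of_degree_ge [Fintype V] [DecidableEq V] {R : SimpleGraph V}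
    [DecidableRel R.Adj] {c : R.ConnectedComponent} {D : Finset V} {δ : ℝ}
    (hD : ∀ v ∈ D, v ∈ c.supp ∧ δ ≤ R.degree v) (hDne : D.Nonempty)
    (h2δ : Fintype.card V < 2 * δ) (hDδ : Fintype.card V < #D + δ) :
    ¬ (R.induce c.supp).Colorable 2 := by
  intro hcol
  obtain ⟨X, Y, hXY, hcover, hX, hY⟩ := exists_isIndepSet_cover_of_colorable hcol
  obtain ⟨u, hu⟩ := hDne
  wlog huX : u ∈ X generalizing X Y
  · exact this Y X hXY.symm (fun v hv ↦ (hcover v hv).symm) hY hX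
      ((hcover u (hD u hu).1).resolve_left huX)
  have hXY_card : (#X + #Y : ℝ) ≤ Fintype.card V := by
    exact_mod_cast card_union_of_disjoint hXY ▸ card_le_univ (X ∪ Y)
  have hYδ : δ ≤ #Y := (hD u hu).2.trans (by
    exact_mod_cast degree_le_card_of_isIndepSet_cover hcover hX (hD u hu).1 huX)
  by_cases hDX : D ⊆ X
  · have : (#D : ℝ) ≤ #X := by exact_mod_cast card_le_card hDX
    linarith
  · obtain ⟨w, hwD, hwX⟩ := not_subset.mp hDX
    have hwY := (hcover w (hD w hwD).1).resolve_left hwX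
    have hXδ : δ ≤ #X := (hD w hwD).2.trans (by
      exact_mod_cast degree_le_card_of_isIndepSet_cover (fun v hv ↦ (hcover v hv).symm) hY
        (hD w hwD).1 hwY)
    linarith

theorem not_colorable_two_of_isIndepSet_card_le [Fintype V] [DecidableEq V] {R : SimpleGraph V}
    {c : R.ConnectedComponent} {H : Finset V} {α : ℝ} (hH : ∀ v ∈ H, v ∈ c.supp)
    (hα : ∀ S ⊆ H, R.IsIndepSet (S : Set V) → (#S : ℝ) ≤ α) (h : 2 * α < #H) :
    ¬ (R.induce c.supp).Colorable 2 := by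
  intro hcol
  obtain ⟨X, Y, -, hcover, hX, hY⟩ := exists_isIndepSet_cover_of_colorable hcol
  have hsplit : #H ≤ #(H ∩ X) + #(H ∩ Y) := by
    refine (card_le_card fun v hv ↦ ?_).trans (card_union_le _ _)
    rcases hcover v (hH v hv) with hvX | hvY
    · exact mem_union_left _ (mem_inter.mpr ⟨hv, hvX⟩)
    · exact mem_union_right _ (mem_inter.mpr ⟨hv, hvY⟩)
  have hHX := hα (H ∩ X) inter_subset_left (hX.mono (by simp))
  have hHY := hα (H ∩ Y) inter_subset_left (hY.mono (by simp))
  have : (#H : ℝ) ≤ #(H ∩ X) + #(H ∩ Y) := by exact_mod_cast hsplit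
  linarith

theorem exists_isMatching_of_forall_exists_adj [Finite V] {R : SimpleGraph V} (S : Set V)
    (P : Set V → Prop)
    (hext : ∀ M : R.Subgraph, M.IsMatching → M.verts ⊆ S → ¬ P M.verts →
      ∃ u w, R.Adj u w ∧ u ∈ S ∧ w ∈ S ∧ u ∉ M.verts ∧ w ∉ M.verts) :
    ∃ M : R.Subgraph, M.IsMatching ∧ M.verts ⊆ S ∧ P M.verts := by
  obtain ⟨M, ⟨hM, hMS⟩, hmax⟩ := Set.exists_max_image
    {M : R.Subgraph | M.IsMatching ∧ M.verts ⊆ S} (fun M ↦ M.verts.ncard) (Set.toFinite _)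
    ⟨⊥, fun _ hv ↦ hv.elim, fun _ hv ↦ hv.elim⟩
  refine ⟨M, hM, hMS, by_contra fun hP ↦ ?_⟩
  obtain ⟨u, w, huw, hu, hw, huM, hwM⟩ := hext M hM hMS hP
  have hdisj : Disjoint M.support (R.subgraphOfAdj huw).support := by
    rw [hM.support_eq_verts, (Subgraph.IsMatching.subgraphOfAdj huw).support_eq_verts,
      subgraphOfAdj_verts]
    simp [Set.disjoint_right, huM, hwM]
  have hle := hmax (M ⊔ R.subgraphOfAdj huw)
    ⟨hM.sup (.subgraphOfAdj huw) hdisj, by simp [Set.insert_subset_iff, hMS, hu, hw]⟩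
  have hlt : M.verts.ncard < (M ⊔ R.subgraphOfAdj huw).verts.ncard :=
    Set.ncard_lt_ncard ⟨fun x hx ↦ by simp [hx], fun h ↦ huM (h (by simp))⟩
  exact hle.not_gt hlt

theorem exists_isMatching_ncard_ge [Fintype V] {R : SimpleGraph V} [DecidableRel R.Adj]
    {c : R.ConnectedComponent} {D H : Finset V} {δ α : ℝ}
    (hD : ∀ v ∈ D, v ∈ c.supp ∧ δ ≤ R.degree v) (hH : ∀ v ∈ H, v ∈ c.supp) (hDH : Disjoint D H)
    (hα : ∀ S ⊆ H, R.IsIndepSet (S : Set V) → (#S : ℝ) ≤ α) :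
    ∃ M : R.Subgraph, M.IsMatching ∧ M.verts ⊆ c.supp ∧
      (δ ≤ M.verts.ncard ∨ (#D + #H : ℝ) ≤ M.verts.ncard + α) := by
  classical
  let Done (X : Set V) : Prop := δ ≤ X.ncard ∨ ((D : Set V) ⊆ X ∧ (#(H.filter (· ∉ X)) : ℝ) ≤ α)
  have hext (M : R.Subgraph) (hM : M.IsMatching) (hMc : M.verts ⊆ c.supp) (hP : ¬ Done M.verts) :
      ∃ u w, R.Adj u w ∧ u ∈ c.supp ∧ w ∈ c.supp ∧ u ∉ M.verts ∧ w ∉ M.verts := by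
    simp only [Done, not_or, not_and, not_le] at hP
    obtain ⟨hsmall, hrest⟩ := hP
    by_cases hDM : (D : Set V) ⊆ M.verts
    · have hnot : ¬ R.IsIndepSet (H.filter (· ∉ M.verts) : Set V) := fun hind ↦
        (hrest hDM).not_ge (hα _ (filter_subset _ _) hind)
      simp only [IsIndepSet, Set.Pairwise, not_forall, not_not, coe_filter,
        Set.mem_ofPred_eq] at hnot
      obtain ⟨u, ⟨huH, huM⟩, w, ⟨hwH, hwM⟩, -, huw⟩ := hnot
      exact ⟨u, w, huw, hH u huH, hH w hwH, huM, hwM⟩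
    · obtain ⟨u, huD, huM⟩ := Set.not_subset.mp hDM
      obtain ⟨hu, hdeg⟩ := hD u huD
      obtain ⟨w, huw, hwM⟩ := exists_adj_notMem_of_ncard_lt_degree (X := M.verts)
        (by exact_mod_cast hsmall.trans_le hdeg)
      exact ⟨u, w, huw, hu, c.mem_supp_of_adj_mem_supp hu huw, huM, hwM⟩
  obtain ⟨M, hM, hMc, hP⟩ := exists_isMatching_of_forall_exists_adj c.supp Done hext
  refine ⟨M, hM, hMc, hP.imp_right fun ⟨hDM, _⟩ ↦ ?_⟩
  have hcover : ↑(D ∪ H.filter (· ∈ M.verts)) ⊆ M.verts := by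
    rw [coe_union]
    exact Set.union_subset hDM fun v hv ↦ (mem_filter.mp hv).2
  have hle := Set.ncard_le_ncard hcover
  rw [Set.ncard_coe_finset, card_union_of_disjoint (hDH.mono_right (filter_subset _ _))] at hle
  have hsplit := card_filter_add_card_filter_not (s := H) (p := (· ∈ M.verts))
  have : (#D + #(H.filter (· ∈ M.verts)) : ℝ) ≤ M.verts.ncard := by exact_mod_cast hle
  have : (#(H.filter (· ∈ M.verts)) + #(H.filter (· ∉ M.verts)) : ℝ) = #H := by
    exact_mod_cast hsplit
  linarith

theorem exists_subset_reachable_of_degree_compl_le [Fintype V] [DecidableEq V]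
    {G R : SimpleGraph V} [DecidableRel G.Adj] {H : Finset V} (hHne : H.Nonempty)
    (hGR : ∀ v ∈ H, ∀ w ∈ H, G.Adj v w → R.Adj v w) {k : ℝ}
    (hk : ∀ v ∈ H, (Gᶜ.degree v : ℝ) ≤ k) :
    ∃ u, ∃ H₁ ⊆ H, (∀ v ∈ H₁, R.Reachable u v) ∧ (#H : ℝ) ≤ #H₁ + k + 1 ∧
      ∀ S ⊆ H₁, R.IsIndepSet (S : Set V) → (#S : ℝ) ≤ k + 1 := by
  classical
  obtain ⟨u, hu⟩ := hHne
  refine ⟨u, H.filter (R.Reachable u), filter_subset _ _, fun v hv ↦ (mem_filter.mp hv).2, ?_, ?_⟩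
  · have hsplit := card_filter_add_card_filter_not (s := H) (p := R.Reachable u)
    have hfar := card_le_degree_compl_add_one G (S := H.filter (¬ R.Reachable u ·)) (u := u)
      fun w hw _ huw ↦ (mem_filter.mp hw).2 (hGR u hu w (mem_filter.mp hw).1 huw).reachable
    have : (#(H.filter (R.Reachable u)) + #(H.filter (¬ R.Reachable u ·)) : ℝ) = #H := by
      exact_mod_cast hsplit
    have : (#(H.filter (¬ R.Reachable u ·)) : ℝ) ≤ Gᶜ.degree u + 1 := by exact_mod_cast hfar
    linarith [hk u hu]
  · intro S hS hind
    obtain rfl | ⟨v, hv⟩ := S.eq_empty_or_nonempty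
    · have : (0 : ℝ) ≤ Gᶜ.degree u := Nat.cast_nonneg _
      simp only [card_empty, Nat.cast_zero]
      linarith [hk u hu]
    have hvH := (mem_filter.mp (hS hv)).1
    have := card_le_degree_compl_add_one G (S := S) (u := v) fun w hw hwv hvw ↦
      hind hv hw (Ne.symm hwv) (hGR v hvH w (mem_filter.mp (hS hw)).1 hvw)
    have : (#S : ℝ) ≤ Gᶜ.degree v + 1 := by exact_mod_cast this
    linarith [hk v hvH]

end SimpleGraph

theorem propertyM_of_isMatching {V : Type} {R : SimpleGraph V} {M : R.Subgraph}
    (hM : M.IsMatching) {c : R.ConnectedComponent} (hMc : M.verts ⊆ c.supp)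
    (hc : ¬ (R.induce c.supp).Colorable 2) {t : ℝ} (ht : t ≤ M.verts.ncard) : PropertyM R t :=
  ⟨M, hM, Int.ceil_le.mpr (by exact_mod_cast ht), c, hMc, hc⟩

theorem propertyM_of_degree_ge {V : Type} [Fintype V] {R : SimpleGraph V} [DecidableRel R.Adj]
    {c : R.ConnectedComponent} {D H : Finset V} {δ α t : ℝ}
    (hD : ∀ v ∈ D, v ∈ c.supp ∧ δ ≤ R.degree v) (hH : ∀ v ∈ H, v ∈ c.supp) (hDH : Disjoint D H)
    (hα : ∀ S ⊆ H, R.IsIndepSet (S : Set V) → (#S : ℝ) ≤ α)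
    (hc : ¬ (R.induce c.supp).Colorable 2) (htδ : t ≤ δ) (ht : t ≤ #D + #H - α) :
    PropertyM R t := by
  obtain ⟨M, hM, hMc, hlarge⟩ := exists_isMatching_ncard_ge hD hH hDH hα
  exact propertyM_of_isMatching hM hMc hc (by rcases hlarge with h | h <;> linarith)

theorem propertyM_of_many_degree_ge {V : Type} [Fintype V] [DecidableEq V] {R : SimpleGraph V}
    [DecidableRel R.Adj] {D : Finset V} (hDne : D.Nonempty) {δ t : ℝ}
    (hD : ∀ v ∈ D, δ ≤ R.degree v) (h2δ : Fintype.card V < 2 * δ)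
    (hDδ : Fintype.card V < #D + δ) (htδ : t ≤ δ) (htD : t ≤ #D) : PropertyM R t := by
  obtain ⟨u, hu⟩ := hDne
  have hDc : ∀ v ∈ D, v ∈ (R.connectedComponentMk u).supp ∧ δ ≤ R.degree v := by
    refine fun v hv ↦ ⟨ConnectedComponent.sound (reachable_of_card_lt_card_add_degree
      (S := R.neighborFinset u) (fun w hw ↦ ((mem_neighborFinset ..).mp hw).reachable) ?_).symm,
      hD v hv⟩
    rw [card_neighborFinset_eq_degree]
    have := hD u hu
    have := hD v hv
    exact_mod_cast (by linarith : (Fintype.card V : ℝ) < R.degree u + R.degree v)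
  refine propertyM_of_degree_ge (H := ∅) (α := 0) hDc (by simp) (disjoint_empty_right _)
    (fun S hS _ ↦ by simp [subset_empty.mp hS])
    (not_colorable_two_of_degree_ge hDc ⟨u, hu⟩ h2δ hDδ) htδ (by simpa using htD)

theorem propertyM_of_reachable_isIndepSet_card_le {V : Type} [Fintype V] [DecidableEq V]
    {R : SimpleGraph V} [DecidableRel R.Adj] {u : V} {D H : Finset V} {δ α t : ℝ}
    (hH : ∀ v ∈ H, R.Reachable u v) (hD : ∀ v ∈ D, δ ≤ R.degree v) (hDH : Disjoint D H)
    (hα : ∀ S ⊆ H, R.IsIndepSet (S : Set V) → (#S : ℝ) ≤ α)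
    (hHδ : Fintype.card V < #H + δ) (hHα : 2 * α < #H) (htδ : t ≤ δ)
    (ht : t ≤ #D + #H - α) : PropertyM R t := by
  have hHc : ∀ v ∈ H, v ∈ (R.connectedComponentMk u).supp := fun v hv ↦
    ConnectedComponent.sound (hH v hv).symm
  have hDc : ∀ v ∈ D, v ∈ (R.connectedComponentMk u).supp ∧ δ ≤ R.degree v := by
    refine fun v hv ↦ ⟨ConnectedComponent.sound (reachable_of_card_lt_card_add_degree hH ?_).symm,
      hD v hv⟩
    have := hD v hv
    exact_mod_cast (by linarith : (Fintype.card V : ℝ) < #H + R.degree v)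
  exact propertyM_of_degree_ge hDc hHc hDH hα
    (not_colorable_two_of_isIndepSet_card_le hHc hα hHα) htδ ht

theorem propertyM_of_isIndepSet_heavy_of_few_degree_ge {V : Type} [Fintype V] [DecidableEq V]
    {B R : SimpleGraph V} [DecidableRel B.Adj] [DecidableRel R.Adj] [DecidableRel (B ⊔ R).Adj]
    (hBR : Disjoint B R) {σ : ℝ} (hσ : σ ≤ 0.0032) (hσn : 1 ≤ σ * Fintype.card V)
    (hheavy : B.IsIndepSet {v | (1 / 2 - 13 * σ) * Fintype.card V ≤ B.degree v})
    (hA : (#(univ.filter fun v ↦ σ * Fintype.card V < (B ⊔ R)ᶜ.degree v) : ℝ)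
      ≤ 2 * σ * Fintype.card V)
    (hD : (#(univ.filter fun v ↦ (1 / 2 + 12 * σ) * Fintype.card V - 1 ≤ R.degree v) : ℝ)
      < (1 / 2 + 13 * σ ^ 2) * Fintype.card V) :
    PropertyM R ((1 / 2 + 13 * σ ^ 2) * Fintype.card V) := by
  set n : ℝ := (Fintype.card V : ℝ)
  have hσn' : σ * n ≤ 0.0032 * n := mul_le_mul_of_nonneg_right hσ (Nat.cast_nonneg _)
  have hσ2₀ : 0 ≤ σ ^ 2 * n := by positivity
  have hσ2 : σ ^ 2 * n ≤ 0.0032 * (σ * n) := by nlinarith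
  set δ : ℝ := (1 / 2 + 12 * σ) * n - 1 with hδ
  set D := univ.filter fun v ↦ δ ≤ R.degree v
  set A := univ.filter fun v ↦ σ * n < (B ⊔ R)ᶜ.degree v
  set H := (D ∪ A)ᶜ
  have hcover : n ≤ #D + #A + #H := by
    have : #H + #(D ∪ A) = Fintype.card V := card_compl_add_card _
    have := card_union_le D A
    show (Fintype.card V : ℝ) ≤ _
    exact_mod_cast (by omega : Fintype.card V ≤ #D + #A + #H)
  have hHD : ∀ v ∈ H, (R.degree v : ℝ) < δ ∧ ((B ⊔ R)ᶜ.degree v : ℝ) ≤ σ * n := fun v hv ↦ by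
    simpa [H, D, A] using hv
  have hHheavy : ∀ v ∈ H, (1 / 2 - 13 * σ) * n ≤ B.degree v := by
    intro v hv
    have hdeg := cast_degree_compl (B ⊔ R) v
    rw [degree_sup_of_disjoint hBR, Nat.cast_add] at hdeg
    linarith [hHD v hv]
  have hHR : ∀ v ∈ H, ∀ w ∈ H, (B ⊔ R).Adj v w → R.Adj v w := fun v hv w hw hvw ↦
    hvw.resolve_left (hheavy (hHheavy v hv) (hHheavy w hw) hvw.ne)
  obtain ⟨u, H₁, hH₁H, hH₁u, hH₁, hα⟩ := exists_subset_reachable_of_degree_compl_le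
    (card_pos.mp (by exact_mod_cast (by linarith : (0 : ℝ) < #H))) hHR fun v hv ↦ (hHD v hv).2
  have hDH₁ : Disjoint D H₁ :=
    (disjoint_compl_right.mono_left subset_union_left).mono_right hH₁H
  exact propertyM_of_reachable_isIndepSet_card_le (D := D) hH₁u
    (fun v hv ↦ (mem_filter.mp hv).2) hDH₁ hα (by linarith) (by linarith) (by linarith)
    (by linarith)

theorem propertyM_of_isIndepSet_heavy {V : Type} [Fintype V] [DecidableEq V]
    {B R : SimpleGraph V} [DecidableRel B.Adj] [DecidableRel R.Adj] [DecidableRel (B ⊔ R).Adj]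
    (hBR : Disjoint B R) {σ : ℝ} (hσ : σ ≤ 0.0032) (hσn : 1 ≤ σ * Fintype.card V)
    (hmiss : ∑ v, ((B ⊔ R)ᶜ.degree v : ℝ) ≤ 2 * σ ^ 2 * Fintype.card V ^ 2)
    (hheavy : B.IsIndepSet {v | (1 / 2 - 13 * σ) * Fintype.card V ≤ B.degree v}) :
    PropertyM R ((1 / 2 + 13 * σ ^ 2) * Fintype.card V) := by
  set n : ℝ := (Fintype.card V : ℝ)
  have hσ2₀ : 0 ≤ σ ^ 2 * n := by positivity
  have hσ2 : σ ^ 2 * n ≤ 0.0032 * (σ * n) := by nlinarith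
  have hA : (#(univ.filter fun v ↦ σ * n < (B ⊔ R)ᶜ.degree v) : ℝ) ≤ 2 * σ * n := by
    have := card_filter_lt_mul_le_sum univ (fun v ↦ Nat.cast_nonneg ((B ⊔ R)ᶜ.degree v)) (σ * n)
    refine le_of_mul_le_mul_right ?_ (by linarith : 0 < σ * n)
    nlinarith
  set δ : ℝ := (1 / 2 + 12 * σ) * n - 1 with hδ
  set D := univ.filter fun v ↦ δ ≤ R.degree v
  by_cases hDt : (1 / 2 + 13 * σ ^ 2) * n ≤ #D
  · refine propertyM_of_many_degree_ge (D := D) (δ := δ) ?_ (fun v hv ↦ (mem_filter.mp hv).2)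
      (by linarith) (by linarith) (by linarith) hDt
    exact card_pos.mp (by exact_mod_cast (by nlinarith : (0 : ℝ) < #D))
  · exact propertyM_of_isIndepSet_heavy_of_few_degree_ge hBR hσ hσn hheavy hA (not_le.mp hDt)

/-- For `0 < ε ≤ 10⁻⁵` and integer `s ≥ 1/√ε`: if a graph on `s` vertices with
at least `s(s-1)/2 - εs²` edges is partitioned into blue `B` and red `R`, `R` does not have
property `M_{(1/2+13ε)s}`, and `B` is triangle-free, then there are disjoint sets `W1, W2`
of size at least `(1/2 - 13√ε)s` such that every blue edge inside `W1 ∪ W2` goes between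
`W1` and `W2`. -/
theorem blue_bipartite_structure :
    ∀ ε : ℝ, 0 < ε → ε ≤ 1 / 100000 → ∀ s : ℕ, (1 : ℝ) / Real.sqrt ε ≤ (s : ℝ) →
    ∀ G B R : SimpleGraph (Fin s),
    (s : ℝ) * ((s : ℝ) - 1) / 2 - ε * (s : ℝ) ^ 2 ≤ (G.edgeSet.ncard : ℝ) →
    B ⊔ R = G → B ⊓ R = ⊥ →
    ¬ PropertyM R ((1 / 2 + 13 * ε) * s) → B.CliqueFree 3 →
    ∃ W1 W2 : Set (Fin s), Disjoint W1 W2 ∧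
      (1 / 2 - 13 * Real.sqrt ε) * s ≤ (W1.ncard : ℝ) ∧
      (1 / 2 - 13 * Real.sqrt ε) * s ≤ (W2.ncard : ℝ) ∧
      ∀ v w : Fin s, v ∈ W1 ∪ W2 → w ∈ W1 ∪ W2 → B.Adj v w →
        ((v ∈ W1 ∧ w ∈ W2) ∨ (v ∈ W2 ∧ w ∈ W1)) := by
  intro ε hε hε' s hs G B R hG hBR hBR' hM hB
  classical
  by_cases hheavy : B.IsIndepSet {v | (1 / 2 - 13 * √ε) * s ≤ B.degree v}
  · subst hBR
    have hσ : √ε ≤ 0.0032 := Real.sqrt_le_iff.mpr ⟨by norm_num, by linarith⟩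
    have hσs : 1 ≤ √ε * s := by rwa [div_le_iff₀ (Real.sqrt_pos.mpr hε), mul_comm] at hs
    have hmiss := sum_degree_compl_le (B ⊔ R) (ε := ε) (by simpa using hG)
    rw [← Real.sq_sqrt hε.le] at hM hmiss
    have hred := propertyM_of_isIndepSet_heavy (disjoint_iff.mpr hBR') hσ (by simpa using hσs)
      (by simpa using hmiss) (by simpa using hheavy)
    exact absurd hred (by simpa using hM)
  · obtain ⟨u, hu, v, hv, -, huv⟩ : ∃ u ∈ {v | (1 / 2 - 13 * √ε) * s ≤ B.degree v},
        ∃ v ∈ {v | (1 / 2 - 13 * √ε) * s ≤ B.degree v}, u ≠ v ∧ B.Adj u v := by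
      simpa [IsIndepSet, Set.Pairwise] using hheavy
    obtain ⟨hdisj, hbip⟩ := hB.isBipartition_neighborSet_of_adj huv
    exact ⟨_, _, hdisj, by rwa [ncard_neighborSet], by rwa [ncard_neighborSet], hbip⟩
end

section
/- Let n be sufficiently large, let G̃ be an n-fit graph with vertex set V, and let V1, V2 ⊆ V be disjoint sets with |V1|, |V2| ≥ 0.99n. Then all vertices of G̃, except at most one, have at least 0.23n neighbors in V1 and at least 0.23n neighbors in V2. -/
open SimpleGraph

lemma myrpow_bound (n : ℕ) (hn : 10^7 ≤ n) : (n:ℝ) ^ (0.7 : ℝ) ≤ 0.01 * n := by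
  have hx : (10^7 : ℝ) ≤ (n:ℝ) := by exact_mod_cast hn
  have hx0 : (0:ℝ) ≤ (n:ℝ) := by positivity
  have h10 : ((n:ℝ) ^ (0.7:ℝ)) ^ (10:ℕ) = (n:ℝ) ^ (7:ℕ) := by
    rw [← Real.rpow_natCast ((n:ℝ) ^ (0.7:ℝ)) 10, ← Real.rpow_mul hx0,
      show (0.7 : ℝ) * ((10:ℕ):ℝ) = ((7:ℕ):ℝ) by norm_num, Real.rpow_natCast]
  refine le_of_pow_le_pow_left₀ (n := 10) (by norm_num) (by positivity) ?_
  rw [h10]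
  have h3 : (10:ℝ)^21 ≤ (n:ℝ)^3 := by
    have := pow_le_pow_left₀ (by norm_num : (0:ℝ) ≤ 10^7) hx 3
    nlinarith [this]
  have h7 : (0:ℝ) ≤ (n:ℝ)^7 := by positivity
  have : (0.01 * (n:ℝ))^10 = (n:ℝ)^7 * ((n:ℝ)^3 * 0.01^10) := by ring
  rw [this]
  nlinarith

/-- split lemma: for finite V with `Nat.card V = 2n-1`, disjoint A B,
`|S| ≤ |S∩A| + |S∩B| + ((2n-1) - |A| - |B|)` over ℝ. -/
lemma mysplit {V : Type} [Finite V] {n : ℕ} (hn : 1 ≤ n) (hcard : Nat.card V = 2*n - 1)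
    {A B : Set V} (hdisj : Disjoint A B) (S : Set V) :
    (S.ncard : ℝ) ≤ (S ∩ A).ncard + (S ∩ B).ncard + ((2*n - 1 : ℝ) - A.ncard - B.ncard) := by
  have e1 : (S ∩ A).ncard + (S \ A).ncard = S.ncard :=
    Set.ncard_inter_add_ncard_diff_eq_ncard S A (Set.toFinite S)
  have e2 : ((S \ A) ∩ B).ncard + ((S \ A) \ B).ncard = (S \ A).ncard :=
    Set.ncard_inter_add_ncard_diff_eq_ncard _ B (Set.toFinite _)
  have e3 : (S \ A) ∩ B = S ∩ B := by
    ext x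
    simp only [Set.mem_inter_iff, Set.mem_diff]
    have hxd : x ∈ B → x ∉ A := fun h => Set.disjoint_right.mp hdisj h
    tauto
  have e4 : ((S \ A) \ B).ncard ≤ ((A ∪ B)ᶜ).ncard := by
    apply Set.ncard_le_ncard _ (Set.toFinite _)
    intro x hx
    simp only [Set.mem_diff] at hx
    simp only [Set.mem_compl_iff, Set.mem_union]
    tauto
  have e5 : (A ∪ B).ncard + ((A ∪ B)ᶜ).ncard = 2*n - 1 := by
    rw [Set.ncard_add_ncard_compl, hcard]
  have e6 : (A ∪ B).ncard = A.ncard + B.ncard := Set.ncard_union_eq hdisj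
  have hc : ((2*n - 1 : ℕ) : ℝ) = 2*(n:ℝ) - 1 := by
    have : 1 ≤ 2*n := by omega
    push_cast [Nat.cast_sub this]
    ring
  rw [e6] at e5
  have e5' : (A.ncard : ℝ) + B.ncard + ((A ∪ B)ᶜ).ncard = 2*(n:ℝ) - 1 := by
    rw [← hc]; exact_mod_cast congrArg (Nat.cast : ℕ → ℝ) e5
  have e1' : ((S ∩ A).ncard : ℝ) + (S \ A).ncard = S.ncard := by exact_mod_cast e1
  have e2' : (((S \ A) ∩ B).ncard : ℝ) + ((S \ A) \ B).ncard = (S \ A).ncard := by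
    exact_mod_cast e2
  have e4' : (((S \ A) \ B).ncard : ℝ) ≤ ((A ∪ B)ᶜ).ncard := by exact_mod_cast e4
  rw [e3] at e2'
  linarith

/-- common neighborhood in B is large. -/
lemma myinter {V : Type} [Finite V] (X Y B : Set V) (hX : X ⊆ B) (hY : Y ⊆ B) :
    (X.ncard : ℝ) + Y.ncard - B.ncard ≤ ((X ∩ Y).ncard : ℝ) := by
  have e1 : (X ∩ Y).ncard + (X ∪ Y).ncard = X.ncard + Y.ncard :=
    Set.ncard_inter_add_ncard_union X Y (Set.toFinite _) (Set.toFinite _)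
  have e2 : (X ∪ Y).ncard ≤ B.ncard :=
    Set.ncard_le_ncard (Set.union_subset hX hY) (Set.toFinite _)
  have e1' : ((X ∩ Y).ncard : ℝ) + (X ∪ Y).ncard = X.ncard + Y.ncard := by exact_mod_cast e1
  have e2' : ((X ∪ Y).ncard : ℝ) ≤ B.ncard := by exact_mod_cast e2
  linarith

lemma key_same {V : Type} [Finite V] {n : ℕ} (hn : 10^7 ≤ n) (G : SimpleGraph V)
    (hcard : Nat.card V = 2*n - 1)
    (hdeg : ∀ v : V, n + 1 ≤ (G.neighborSet v).ncard)
    (hcodeg : ∀ v w : V, v ≠ w →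
      |(((G.neighborSet v ∩ G.neighborSet w).ncard : ℕ) : ℝ) - n / 2| ≤ (n : ℝ) ^ (0.7 : ℝ))
    {A B : Set V} (hdisj : Disjoint A B)
    (hA : (0.99 : ℝ) * n ≤ A.ncard) (hB : (0.99 : ℝ) * n ≤ B.ncard)
    {v w : V} (hvw : v ≠ w)
    (hv : ((G.neighborSet v ∩ A).ncard : ℝ) < 0.23 * n)
    (hw : ((G.neighborSet w ∩ A).ncard : ℝ) < 0.23 * n) : False := by
  have hn1 : 1 ≤ n := le_trans (by norm_num) hn
  have hpow := myrpow_bound n hn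
  set Nv := G.neighborSet v
  set Nw := G.neighborSet w
  have dv : ((n:ℝ)) + 1 ≤ (Nv.ncard : ℝ) := by exact_mod_cast hdeg v
  have dw : ((n:ℝ)) + 1 ≤ (Nw.ncard : ℝ) := by exact_mod_cast hdeg w
  have sv := mysplit hn1 hcard hdisj Nv
  have sw := mysplit hn1 hcard hdisj Nw
  have hint := myinter (Nv ∩ B) (Nw ∩ B) B Set.inter_subset_right Set.inter_subset_right
  have hsub : (((Nv ∩ B) ∩ (Nw ∩ B)).ncard : ℝ) ≤ ((Nv ∩ Nw).ncard : ℝ) := by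
    exact_mod_cast Set.ncard_le_ncard (by intro x hx; exact ⟨hx.1.1, hx.2.1⟩) (Set.toFinite _)
  have hcd := (abs_le.mp (hcodeg v w hvw)).2
  linarith

lemma key_mixed {V : Type} [Finite V] {n : ℕ} (hn : 10^7 ≤ n) (G : SimpleGraph V)
    (hcard : Nat.card V = 2*n - 1)
    (hcodeg : ∀ v w : V, v ≠ w →
      |(((G.neighborSet v ∩ G.neighborSet w).ncard : ℕ) : ℝ) - n / 2| ≤ (n : ℝ) ^ (0.7 : ℝ))
    {A B : Set V} (hdisj : Disjoint A B)
    (hA : (0.99 : ℝ) * n ≤ A.ncard) (hB : (0.99 : ℝ) * n ≤ B.ncard)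
    {v w : V} (hvw : v ≠ w)
    (hv : ((G.neighborSet v ∩ A).ncard : ℝ) < 0.23 * n)
    (hw : ((G.neighborSet w ∩ B).ncard : ℝ) < 0.23 * n) : False := by
  have hn1 : 1 ≤ n := le_trans (by norm_num) hn
  have hpow := myrpow_bound n hn
  set Nv := G.neighborSet v
  set Nw := G.neighborSet w
  have sS := mysplit hn1 hcard hdisj (Nv ∩ Nw)
  have hsubA : (((Nv ∩ Nw) ∩ A).ncard : ℝ) ≤ ((Nv ∩ A).ncard : ℝ) := by
    exact_mod_cast Set.ncard_le_ncard (by intro x hx; exact ⟨hx.1.1, hx.2⟩) (Set.toFinite _)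
  have hsubB : (((Nv ∩ Nw) ∩ B).ncard : ℝ) ≤ ((Nw ∩ B).ncard : ℝ) := by
    exact_mod_cast Set.ncard_le_ncard (by intro x hx; exact ⟨hx.1.2, hx.2⟩) (Set.toFinite _)
  have hcd := (abs_le.mp (hcodeg v w hvw)).1
  linarith

/-- For sufficiently large `n`, in an `n`-fit graph with disjoint vertex sets
`V1, V2` of size at least `0.99n`, all vertices except at most one have at least `0.23n`
neighbors in each of `V1` and `V2`. -/
theorem almost_all_vertices_many_neighbors :
    ∃ N : ℕ, ∀ n : ℕ, N ≤ n →
    ∀ (V : Type) (G : SimpleGraph V), IsNFit n G →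
    ∀ V1 V2 : Set V, Disjoint V1 V2 →
    (0.99 : ℝ) * n ≤ (V1.ncard : ℝ) → (0.99 : ℝ) * n ≤ (V2.ncard : ℝ) →
    {v : V | ¬ ((0.23 : ℝ) * n ≤ ((G.neighborSet v ∩ V1).ncard : ℝ) ∧
                (0.23 : ℝ) * n ≤ ((G.neighborSet v ∩ V2).ncard : ℝ))}.Subsingleton := by
  refine ⟨10^7, ?_⟩
  intro n hn V G hfit V1 V2 hdisj h1 h2
  obtain ⟨hcard, -, hdeg, -, hcodeg, -⟩ := hfit
  have hfin : Finite V := by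
    by_contra h
    rw [not_finite_iff_infinite] at h
    rw [Nat.card_eq_zero_of_infinite] at hcard
    omega
  have hdeg' : ∀ v : V, n + 1 ≤ (G.neighborSet v).ncard := hdeg
  have hcodeg' : ∀ v w : V, v ≠ w →
      |(((G.neighborSet v ∩ G.neighborSet w).ncard : ℕ) : ℝ) - n / 2| ≤ (n : ℝ) ^ (0.7 : ℝ) :=
    hcodeg
  intro v hv w hw
  by_contra hvw
  simp only [Set.mem_setOf_eq, not_and_or, not_le] at hv hw
  rcases hv with hv1 | hv2 <;> rcases hw with hw1 | hw2
  · exact key_same hn G hcard hdeg' hcodeg' hdisj h1 h2 hvw hv1 hw1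
  · exact key_mixed hn G hcard hcodeg' hdisj h1 h2 hvw hv1 hw2
  · exact key_mixed hn G hcard hcodeg' hdisj.symm h2 h1 hvw hv2 hw1
  · exact key_same hn G hcard hdeg' hcodeg' hdisj.symm h2 h1 hvw hv2 hw2
end
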